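/- Let σ : S → A and τ : T → A^⊥ be courteous, strong-receptive pre-∼-strategies between essps, with symmetries presented as spans l_S, r_S : S̃ → S, l_T, r_T : T̃ → T, l_A, r_A : Ã → A. Forgetting polarities, let S ⊛ T be the pullback of σ and τ in event structures and S̃ ⊛ T̃ the pullback of the induced maps σ̃ : S̃ → Ã and τ̃ : T̃ → Ã, with l, r : S̃ ⊛ T̃ → S ⊛ T the maps obtained from the universal property of S ⊛ T applied to (l_S ∘ Π̃₁, l_T ∘ Π̃₂) and (r_S ∘ Π̃₁, r_T ∘ Π̃₂). Then l and r are open, jointly monic, and form an equivalence, so (S̃ ⊛ T̃, l, r) is a symmetry on S ⊛ T; the projections Π₁ : S ⊛ T → S and Π₂ : S ⊛ T → T preserve symmetry; and the resulting square is a pullback of σ and τ in the category of event structures with symmetry. -/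

import Mathlib

set_option autoImplicit false
set_option maxHeartbeats 1000000

universe u

/-- An event structure. -/
structure ES (E : Type u) where
  le : E → E → Prop
  le_refl : ∀ e, le e e
  le_trans : ∀ {a b c}, le a b → le b c → le a c
  le_antisymm : ∀ {a b}, le a b → le b a → a = b
  Con : Set (Set E)
  con_empty : (∅ : Set E) ∈ Con
  causes_finite : ∀ e, {e' | le e' e}.Finite
  con_finite : ∀ X ∈ Con, Set.Finite X
  con_singleton : ∀ e, ({e} : Set E) ∈ Con
  con_mono : ∀ {X Y : Set E}, Y ⊆ X → X ∈ Con → Y ∈ Con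
  con_extend : ∀ {X : Set E} {e e' : E}, X ∈ Con → le e e' → e' ∈ X → X ∪ {e} ∈ Con

variable {E F G H : Type u}

/-- Configurations: finite (via `Con`), consistent, down-closed subsets. -/
def Config (A : ES E) (x : Set E) : Prop :=
  x ∈ A.Con ∧ ∀ ⦃e : E⦄, e ∈ x → ∀ ⦃e' : E⦄, A.le e' e → e' ∈ x

/-- Covering: `x —⊂ e`. -/
def Cov (A : ES E) (x : Set E) (e : E) : Prop :=
  Config A x ∧ e ∉ x ∧ Config A (insert e x)

def ESlt (A : ES E) (e e' : E) : Prop := A.le e e' ∧ e ≠ e'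

/-- Immediate causality `e ⋖ e'`. -/
def Imm (A : ES E) (e e' : E) : Prop :=
  ESlt A e e' ∧ ∀ e'', ESlt A e e'' → ESlt A e'' e' → False

/-- Total maps of event structures. -/
def IsMap (A : ES E) (B : ES F) (f : E → F) : Prop :=
  (∀ x, Config A x → Config B (f '' x)) ∧
  (∀ x, Config A x → ∀ e ∈ x, ∀ e' ∈ x, f e = f e' → e = e')

def Rigid (A : ES E) (B : ES F) (f : E → F) : Prop :=
  IsMap A B f ∧ ∀ e e', A.le e e' → B.le (f e) (f e')

def OpenMap (A : ES E) (B : ES F) (f : E → F) : Prop :=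
  Rigid A B f ∧ ∀ x y, Config A x → Config B y → f '' x ⊆ y →
    ∃ x', Config A x' ∧ x ⊆ x' ∧ f '' x' = y

def ConflictFree (A : ES E) : Prop := ∀ X : Set E, X.Finite → X ∈ A.Con

def IsMinimal (A : ES E) (e : E) : Prop := ∀ e', A.le e' e → e' = e

/-- Event structures with polarities; `true` is Player/positive, `false` is Opponent/negative. -/
structure ESP (E : Type u) extends ES E where
  pol : E → Bool

def ESP.dual (A : ESP E) : ESP E := { toES := A.toES, pol := fun e => !A.pol e }

def IsESPMap (A : ESP E) (B : ESP F) (f : E → F) : Prop :=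
  IsMap A.toES B.toES f ∧ ∀ e, B.pol (f e) = A.pol e

def NegativeESP (A : ESP E) : Prop := ∀ e, IsMinimal A.toES e → A.pol e = false

/-- Single-threaded event structures. -/
def SingleThreaded (A : ES E) : Prop :=
  (∀ e, ∃! m, A.le m e ∧ IsMinimal A m) ∧
  (∀ x e₁ e₂, Cov A x e₁ → Cov A x e₂ → ¬ Config A (insert e₁ (insert e₂ x)) →
    ∃ m, A.le m e₁ ∧ A.le m e₂)

/- ## Relations as bijections between configurations -/

abbrev Rel2 (E : Type u) := Set (E × E)

def rdom (θ : Rel2 E) : Set E := Prod.fst '' θ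
def rran (θ : Rel2 E) : Set E := Prod.snd '' θ
def relBij (θ : Rel2 E) : Prop := ∀ p ∈ θ, ∀ q ∈ θ, (p.1 = q.1 ↔ p.2 = q.2)
def relId (x : Set E) : Rel2 E := (fun e => (e, e)) '' x
def relInv (θ : Rel2 E) : Rel2 E := Prod.swap '' θ
def relComp (θ θ' : Rel2 E) : Rel2 E := {p | ∃ b, (p.1, b) ∈ θ ∧ (b, p.2) ∈ θ'}
def relRestrict (θ : Rel2 E) (x : Set E) : Rel2 E := {p ∈ θ | p.1 ∈ x}
def relMap (f : E → F) (θ : Rel2 E) : Rel2 F := (Prod.map f f) '' θ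

/-- Isomorphism families (without the polarity requirement). -/
def IsIsoFamily (A : ES E) (S : Set (Rel2 E)) : Prop :=
  (∀ θ ∈ S, relBij θ ∧ Config A (rdom θ) ∧ Config A (rran θ)) ∧
  (∀ x, Config A x → relId x ∈ S) ∧
  (∀ θ ∈ S, relInv θ ∈ S) ∧
  (∀ θ ∈ S, ∀ θ' ∈ S, rran θ = rdom θ' → relComp θ θ' ∈ S) ∧
  (∀ θ ∈ S, ∀ x, Config A x → x ⊆ rdom θ → relRestrict θ x ∈ S) ∧
  (∀ θ ∈ S, ∀ x', Config A x' → rdom θ ⊆ x' → ∃ θ' ∈ S, θ ⊆ θ' ∧ rdom θ' = x')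

/-- The members of the family are polarity-preserving. -/
def PolPres (A : ESP E) (S : Set (Rel2 E)) : Prop :=
  ∀ θ ∈ S, ∀ p ∈ θ, A.pol p.1 = A.pol p.2

def FamPres (SA : Set (Rel2 E)) (SB : Set (Rel2 F)) (f : E → F) : Prop :=
  ∀ θ ∈ SA, relMap f θ ∈ SB

/-- `f ∼ g` : the two maps are symmetric. -/
def SymMaps (A : ES E) (SB : Set (Rel2 F)) (f g : E → F) : Prop :=
  ∀ x, Config A x → {p : F × F | ∃ a ∈ x, p = (f a, g a)} ∈ SB

/-- `θ ⊆⁺ θ'`. -/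
def PosRelExt (A : ESP E) (θ θ' : Rel2 E) : Prop :=
  θ ⊆ θ' ∧ ∀ p ∈ θ', p ∉ θ → A.pol p.1 = true ∧ A.pol p.2 = true

/-- `θ ⊆⁻ θ'`. -/
def NegRelExt (A : ESP E) (θ θ' : Rel2 E) : Prop :=
  θ ⊆ θ' ∧ ∀ p ∈ θ', p ∉ θ → A.pol p.1 = false ∧ A.pol p.2 = false

/-- `x ⊆⁺ x'` for configurations. -/
def PosSetExt (A : ESP E) (x x' : Set E) : Prop :=
  x ⊆ x' ∧ ∀ e ∈ x', e ∉ x → A.pol e = true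

def Courteous (S : ESP E) (A : ESP F) (σ : E → F) : Prop :=
  ∀ s₁ s₂, Imm S.toES s₁ s₂ → (S.pol s₁ = true ∨ S.pol s₂ = false) →
    Imm A.toES (σ s₁) (σ s₂)

def Receptive (S : ESP E) (A : ESP F) (σ : E → F) : Prop :=
  ∀ x a, Config S.toES x → Cov A.toES (σ '' x) a → A.pol a = false →
    ∃! s, Cov S.toES x s ∧ σ s = a

def StrongReceptive (S : ESP E) (SS : Set (Rel2 E)) (A : ESP F) (SA : Set (Rel2 F))
    (σ : E → F) : Prop :=
  ∀ θ ∈ SS, ∀ a₁ a₂ : F, A.pol a₁ = false → A.pol a₂ = false →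
    (a₁, a₂) ∉ relMap σ θ → insert (a₁, a₂) (relMap σ θ) ∈ SA →
    ∃! st : E × E, insert st θ ∈ SS ∧ σ st.1 = a₁ ∧ σ st.2 = a₂

/-- Thin: two positive compatible extensions of a member of the family are compatible. -/
def ThinFam (A : ESP E) (S : Set (Rel2 E)) : Prop :=
  ∀ θ ∈ S, ∀ θ₁ ∈ S, ∀ θ₂ ∈ S, PosRelExt A θ θ₁ → PosRelExt A θ θ₂ →
    Config A.toES (rdom θ₁ ∪ rdom θ₂) → θ₁ ∪ θ₂ ∈ S

/-- Race-preserving essp (family-level). -/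
def RacePresFam (A : ESP E) (S : Set (Rel2 E)) : Prop :=
  ∀ θ ∈ S, ∀ θ₁ ∈ S, ∀ θ₂ ∈ S, PosRelExt A θ θ₁ → NegRelExt A θ θ₂ →
    Config A.toES (rdom θ₁ ∪ rdom θ₂) → θ₁ ∪ θ₂ ∈ S

/-- Existence of receptive thin sub-symmetries of `A` and of `A^⊥`. -/
def HasThinReceptiveSubs (A : ESP E) (SA : Set (Rel2 E)) : Prop :=
  (∃ Sp ⊆ SA, IsIsoFamily A.toES Sp ∧
    (∀ θ ∈ Sp, ∀ θ' ∈ SA, NegRelExt A θ θ' → θ' ∈ Sp) ∧ ThinFam A Sp) ∧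
  (∃ Sm ⊆ SA, IsIsoFamily A.toES Sm ∧
    (∀ θ ∈ Sm, ∀ θ' ∈ SA, NegRelExt A.dual θ θ' → θ' ∈ Sm) ∧ ThinFam A.dual Sm)

/-- Thin concurrent games (family-level presentation). -/
def IsTCG (A : ESP E) (SA : Set (Rel2 E)) : Prop :=
  IsIsoFamily A.toES SA ∧ PolPres A SA ∧ RacePresFam A SA ∧ HasThinReceptiveSubs A SA

/-- ∼-strategies. -/
def IsSimStrategy (S : ESP E) (SS : Set (Rel2 E)) (A : ESP F) (SA : Set (Rel2 F))
    (σ : E → F) : Prop :=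
  IsESPMap S A σ ∧ FamPres SS SA σ ∧ IsIsoFamily S.toES SS ∧ PolPres S SS ∧
  Courteous S A σ ∧ StrongReceptive S SS A SA σ ∧ ThinFam S SS

/-- Weak equivalence of ∼-strategies on a common essp. -/
def WeakEquiv {S T GE : Type u} (PS : ESP S) (SS : Set (Rel2 S)) (PT : ESP T)
    (ST : Set (Rel2 T)) (SG : Set (Rel2 GE)) (σ : S → GE) (τ : T → GE) : Prop :=
  ∃ f : S → T, ∃ g : T → S,
    IsESPMap PS PT f ∧ FamPres SS ST f ∧ IsESPMap PT PS g ∧ FamPres ST SS g ∧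
    SymMaps PT.toES ST (f ∘ g) id ∧ SymMaps PS.toES SS (g ∘ f) id ∧
    SymMaps PS.toES SG (τ ∘ f) σ ∧ SymMaps PT.toES SG (σ ∘ g) τ

/- ## Stable families, primes, products, pullbacks -/

def FamLe (Fam : Set (Set E)) (x : Set E) (e e' : E) : Prop :=
  ∀ y ∈ Fam, y ⊆ x → e' ∈ y → e ∈ y

def FamPrime (Fam : Set (Set E)) (x : Set E) (e : E) : Set E :=
  {e' ∈ x | FamLe Fam x e' e}

def IsPrime (Fam : Set (Set E)) (p : Set E) : Prop :=
  ∃ x ∈ Fam, ∃ e ∈ x, p = FamPrime Fam x e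

/-- `e` is the generating (top) event of the prime `p`. -/
def PrRep (Fam : Set (Set E)) (p : Set E) (e : E) : Prop :=
  ∃ x ∈ Fam, e ∈ x ∧ p = FamPrime Fam x e

def PrimeLt (p q : Set E) : Prop := p ⊆ q ∧ p ≠ q

/-- Immediate causality in `Pr(Fam)`. -/
def PrImm (Fam : Set (Set E)) (p q : Set E) : Prop :=
  IsPrime Fam p ∧ IsPrime Fam q ∧ PrimeLt p q ∧
  ∀ r, IsPrime Fam r → PrimeLt p r → PrimeLt r q → False

/-- Configurations of `Pr(Fam)`. -/
def PrConfig (Fam : Set (Set E)) (z : Set (Set E)) : Prop :=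
  z.Finite ∧ (∀ p ∈ z, IsPrime Fam p) ∧
  (∀ p ∈ z, ∀ q, IsPrime Fam q → q ⊆ p → q ∈ z) ∧ ⋃₀ z ∈ Fam

/-- The product stable family `C(A) × C(B)`. -/
def ProdFam (A : ES E) (B : ES F) : Set (Set (E × F)) :=
  {x | x.Finite ∧ Config A (Prod.fst '' x) ∧ Config B (Prod.snd '' x) ∧
    (∀ p ∈ x, ∀ q ∈ x, p.1 = q.1 → p = q) ∧
    (∀ p ∈ x, ∀ q ∈ x, p.2 = q.2 → p = q) ∧
    (∀ p ∈ x, ∀ q ∈ x, p ≠ q → ∃ y ⊆ x,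
      Config A (Prod.fst '' y) ∧ Config B (Prod.snd '' y) ∧ (p ∈ y ↔ q ∉ y))}

/-- The stable family `(C(A) × C(B)) ↾ R` defining the pullback `A ⊛ B` of `f` and `g`. -/
def PbFam (A : ES E) (B : ES F) (f : E → G) (g : F → G) : Set (Set (E × F)) :=
  {x | x ∈ ProdFam A B ∧ ∀ p ∈ x, f p.1 = g p.2}

/- ## Secured bijections -/

def SecStep (A : ES E) (B : ES F) (θ : Set (E × F)) (p q : E × F) : Prop :=
  p ∈ θ ∧ q ∈ θ ∧ (A.le p.1 q.1 ∨ B.le p.2 q.2)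

def SecuredBij (A : ES E) (B : ES F) (f : E → G) (g : F → G) (θ : Set (E × F)) : Prop :=
  Config A (Prod.fst '' θ) ∧ Config B (Prod.snd '' θ) ∧
  (∀ p ∈ θ, ∀ q ∈ θ, (p.1 = q.1 ↔ p.2 = q.2)) ∧
  (∀ p ∈ θ, f p.1 = g p.2) ∧
  (∀ p q, Relation.TransGen (SecStep A B θ) p q → Relation.TransGen (SecStep A B θ) q p → p = q)

/- ## Parallel composition -/

def IsParES (A : ES E) (B : ES F) (P : ES (E ⊕ F)) : Prop :=
  (∀ e e', P.le e e' ↔ Sum.LiftRel A.le B.le e e') ∧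
  (∀ X, X ∈ P.Con ↔ X.Finite ∧ (Sum.inl ⁻¹' X) ∈ A.Con ∧ (Sum.inr ⁻¹' X) ∈ B.Con)

def IsParESP (A : ESP E) (B : ESP F) (P : ESP (E ⊕ F)) : Prop :=
  IsParES A.toES B.toES P.toES ∧
  (∀ a, P.pol (Sum.inl a) = A.pol a) ∧ (∀ b, P.pol (Sum.inr b) = B.pol b)

def parFam (SA : Set (Rel2 E)) (SB : Set (Rel2 F)) : Set (Rel2 (E ⊕ F)) :=
  {θ | ∃ θA ∈ SA, ∃ θB ∈ SB, θ = relMap Sum.inl θA ∪ relMap Sum.inr θB}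

/- ## Copycat -/

def ccPol (A : ESP E) (p : Bool × E) : Bool := cond p.1 (A.pol p.2) (!A.pol p.2)

def ccBase (A : ESP E) (p q : Bool × E) : Prop :=
  (p.1 = q.1 ∧ A.le p.2 q.2) ∨ (p.2 = q.2 ∧ p.1 ≠ q.1 ∧ ccPol A q = true)

def ccLe (A : ESP E) : Bool × E → Bool × E → Prop := Relation.ReflTransGen (ccBase A)

def ccDcl (A : ESP E) (X : Set (Bool × E)) : Set (Bool × E) := {p | ∃ q ∈ X, ccLe A p q}

def IsCopycatOf (A : ESP E) (CA : ESP (Bool × E)) : Prop :=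
  (∀ p q, CA.le p q ↔ ccLe A p q) ∧
  (∀ X, X ∈ CA.Con ↔ X.Finite ∧
    {a | (false, a) ∈ ccDcl A X} ∈ A.Con ∧ {a | (true, a) ∈ ccDcl A X} ∈ A.Con) ∧
  (∀ p, CA.pol p = ccPol A p)

def ccMap (f : E → F) : Bool × E → Bool × F := Prod.map id f

def ccToGame : Bool × E → E ⊕ E := fun p => cond p.1 (Sum.inr p.2) (Sum.inl p.2)

/- ## Symmetry presented as spans -/

def famOf (Et : ES F) (l r : F → E) : Set (Rel2 E) :=
  {θ | ∃ x, Config Et x ∧ θ = {p | ∃ aa ∈ x, p = (l aa, r aa)}}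

def IsSymSpanES (A : ES E) (Et : ES F) (l r : F → E) : Prop :=
  OpenMap Et A l ∧ OpenMap Et A r ∧
  (∀ aa aa', l aa = l aa' → r aa = r aa' → aa = aa') ∧
  (∀ x, Config A x → relId x ∈ famOf Et l r) ∧
  (∀ θ ∈ famOf Et l r, relInv θ ∈ famOf Et l r) ∧
  (∀ θ ∈ famOf Et l r, ∀ θ' ∈ famOf Et l r, rran θ = rdom θ' → relComp θ θ' ∈ famOf Et l r)

def IsSymSpanESP (A : ESP E) (Et : ESP F) (l r : F → E) : Prop :=
  IsSymSpanES A.toES Et.toES l r ∧ IsESPMap Et A l ∧ IsESPMap Et A r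

def MapPresRaces (S : ESP E) (A : ESP F) (f : E → F) : Prop :=
  ∀ x e₁ e₂, Cov S.toES x e₁ → Cov S.toES x e₂ →
    S.pol e₁ = false → S.pol e₂ = true →
    ¬ Config S.toES (insert e₁ (insert e₂ x)) →
    ¬ Config A.toES (insert (f e₁) (insert (f e₂) (f '' x)))

def ReflPosCompat (St : ESP F) (S : ES E) (l : F → E) : Prop :=
  ∀ x x₁ x₂, Config St.toES x → Config St.toES x₁ → Config St.toES x₂ →
    x ⊆ x₁ → x ⊆ x₂ →
    (∀ e ∈ x₁, e ∉ x → St.pol e = true) → (∀ e ∈ x₂, e ∉ x → St.pol e = true) →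
    Config S (l '' x₁ ∪ l '' x₂) → Config St.toES (x₁ ∪ x₂)

/- ## Higher symmetry -/

/-- The higher isomorphism family of an essp given by its family `SA`, at the level of
pairs of events: members correspond to commuting squares `φ' ∘ θ = θ' ∘ φ`. -/
def HigherFam (SA : Set (Rel2 E)) : Set (Rel2 (E × E)) :=
  {Φ | ∃ θ ∈ SA, ∃ θ' ∈ SA, ∃ φ ∈ SA, ∃ φ' ∈ SA,
    rdom φ = rdom θ ∧ rdom φ' = rran θ ∧ rran φ = rdom θ' ∧ rran φ' = rran θ' ∧
    (∀ a b c d, (a, b) ∈ θ → (a, c) ∈ φ → (b, d) ∈ φ' → (c, d) ∈ θ') ∧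
    Φ = {P | ∃ a b c d, (a, b) ∈ θ ∧ (a, c) ∈ φ ∧ (b, d) ∈ φ' ∧ P = ((a, b), (c, d))}}

/-- The higher isomorphism family, transported to the events of `Ã = Pr(SA)`,
i.e. primes of the stable family `SA`. -/
def LiftFam (SA : Set (Rel2 E)) : Set (Rel2 {p : Rel2 E // IsPrime SA p}) :=
  {Θ | ∃ θ ∈ SA, ∃ θ' ∈ SA, ∃ φ ∈ SA, ∃ φ' ∈ SA,
    rdom φ = rdom θ ∧ rdom φ' = rran θ ∧ rran φ = rdom θ' ∧ rran φ' = rran θ' ∧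
    (∀ a b c d, (a, b) ∈ θ → (a, c) ∈ φ → (b, d) ∈ φ' → (c, d) ∈ θ') ∧
    Θ = {P | ∃ a b c d, (a, b) ∈ θ ∧ (a, c) ∈ φ ∧ (b, d) ∈ φ' ∧
          P.1.1 = FamPrime SA θ (a, b) ∧ P.2.1 = FamPrime SA θ' (c, d)}}

/- ## Pullbacks as universal properties -/

def IsPullbackES {A B C P : Type u} (EP : ES P) (EA : ES A) (EB : ES B) (EC : ES C)
    (Pi1 : P → A) (Pi2 : P → B) (f : A → C) (g : B → C) : Prop :=
  IsMap EP EA Pi1 ∧ IsMap EP EB Pi2 ∧ f ∘ Pi1 = g ∘ Pi2 ∧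
  ∀ {X : Type u} (EX : ES X) (h₁ : X → A) (h₂ : X → B),
    IsMap EX EA h₁ → IsMap EX EB h₂ → f ∘ h₁ = g ∘ h₂ →
    ∃! h : X → P, IsMap EX EP h ∧ Pi1 ∘ h = h₁ ∧ Pi2 ∘ h = h₂

def IsPullbackESP {A B C P : Type u} (EP : ESP P) (EA : ESP A) (EB : ESP B) (EC : ESP C)
    (Pi1 : P → A) (Pi2 : P → B) (f : A → C) (g : B → C) : Prop :=
  IsESPMap EP EA Pi1 ∧ IsESPMap EP EB Pi2 ∧ f ∘ Pi1 = g ∘ Pi2 ∧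
  ∀ {X : Type u} (EX : ESP X) (h₁ : X → A) (h₂ : X → B),
    IsESPMap EX EA h₁ → IsESPMap EX EB h₂ → f ∘ h₁ = g ∘ h₂ →
    ∃! h : X → P, IsESPMap EX EP h ∧ Pi1 ∘ h = h₁ ∧ Pi2 ∘ h = h₂

/- ## Composition of strategies -/

def compLeft {S GA GB GC : Type u} (σ : S → GA ⊕ GB) : S ⊕ GC → (GA ⊕ GB) ⊕ GC :=
  Sum.map σ id

def compRight {T GA GB GC : Type u} (τ : T → GB ⊕ GC) : GA ⊕ T → (GA ⊕ GB) ⊕ GC :=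
  Sum.elim (fun a => Sum.inl (Sum.inl a))
    (fun t => Sum.elim (fun b => Sum.inl (Sum.inr b)) (fun c => Sum.inr c) (τ t))

def outAC {A B C : Type u} : (A ⊕ B) ⊕ C → Option (A ⊕ C) :=
  Sum.elim (Sum.elim (fun a => some (Sum.inl a)) (fun _ => none)) (fun c => some (Sum.inr c))

/-- Visible events of the interaction. -/
def VisE {S T GA GB GC : Type u} (σ : S → GA ⊕ GB) (e : (S ⊕ GC) × (GA ⊕ T)) : Prop :=
  (outAC (compLeft σ e.1)).isSome = true

/-- Visible primes of the interaction. -/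
def VisP {S T GA GB GC : Type u} (Fam : Set (Set ((S ⊕ GC) × (GA ⊕ T))))
    (σ : S → GA ⊕ GB) (p : Set ((S ⊕ GC) × (GA ⊕ T))) : Prop :=
  ∃ e, PrRep Fam p e ∧ VisE σ e

/-- The underlying relation of a bijection between configurations of `Pr(Fam)`. -/
def relUnder {P : Type u} (Fam : Set (Set P)) (Θ : Rel2 (Set P)) :
    Rel2 P :=
  {ee | ∃ pq ∈ Θ, PrRep Fam pq.1 ee.1 ∧ PrRep Fam pq.2 ee.2}

/-- The isomorphism family of the pullback `Pr(Fam)` of two ∼-strategies,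
characterised via the projections. -/
def PbSymFam {A B : Type u} (Fam : Set (Set (A × B))) (S1 : Set (Rel2 A))
    (S2 : Set (Rel2 B)) : Set (Rel2 (Set (A × B))) :=
  {Θ | relBij Θ ∧ PrConfig Fam (rdom Θ) ∧ PrConfig Fam (rran Θ) ∧
    relMap Prod.fst (relUnder Fam Θ) ∈ S1 ∧ relMap Prod.snd (relUnder Fam Θ) ∈ S2}

/-- A witness for the concrete composition `τ ⊙ σ` of strategies. -/
structure CompWitness {S T GA GB GC : Type u} (PS : ESP S) (PT : ESP T)
    (PA : ESP GA) (PC : ESP GC) (σ : S → GA ⊕ GB) (τ : T → GB ⊕ GC) where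
  L : ES (S ⊕ GC)
  R : ES (GA ⊕ T)
  hL : IsParES PS.toES PC.toES L
  hR : IsParES PA.toES PT.toES R
  Comp : ESP {p : Set ((S ⊕ GC) × (GA ⊕ T)) //
    VisP (PbFam L R (compLeft σ) (compRight τ)) σ p}
  hle : ∀ p q, Comp.le p q ↔ p.1 ⊆ q.1
  hcon : ∀ X, X ∈ Comp.Con ↔
    X.Finite ∧ ⋃₀ (Subtype.val '' X) ∈ PbFam L R (compLeft σ) (compRight τ)
  co : {p : Set ((S ⊕ GC) × (GA ⊕ T)) //
    VisP (PbFam L R (compLeft σ) (compRight τ)) σ p} → GA ⊕ GC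
  hco : ∀ p e, PrRep (PbFam L R (compLeft σ) (compRight τ)) p.1 e →
    outAC (compLeft σ e.1) = some (co p)
  hpol : ∀ p, Comp.pol p = Sum.elim (fun a => !PA.pol a) (fun c => PC.pol c) (co p)

/-- The isomorphism family of the composition: restriction to visible primes of the
family of the interaction. -/
def cfam {S T GA GB GC : Type u} {PS : ESP S} {PT : ESP T} {PA : ESP GA} {PC : ESP GC}
    {σ : S → GA ⊕ GB} {τ : T → GB ⊕ GC}
    (SS : Set (Rel2 S)) (ST : Set (Rel2 T)) (SA : Set (Rel2 GA)) (SC : Set (Rel2 GC))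
    (w : CompWitness PS PT PA PC σ τ) :
    Set (Rel2 {p : Set ((S ⊕ GC) × (GA ⊕ T)) //
      VisP (PbFam w.L w.R (compLeft σ) (compRight τ)) σ p}) :=
  {Θ | ∃ Φ ∈ PbSymFam (PbFam w.L w.R (compLeft σ) (compRight τ))
      (parFam SS SC) (parFam SA ST),
    relMap Subtype.val Θ =
      {pq ∈ Φ | VisP (PbFam w.L w.R (compLeft σ) (compRight τ)) σ pq.1 ∧
                VisP (PbFam w.L w.R (compLeft σ) (compRight τ)) σ pq.2}}
/- ### Auxiliary machinery for Statement 13 -/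

section Stmt13Aux

lemma ES.con_of_dominated_aux (A : ES E) {Y : Set E} (hYfin : Y.Finite) :
    ∀ n (X : Set E), (Y \ X).ncard = n → X ∈ A.Con → X ⊆ Y →
      (∀ y ∈ Y, ∃ x ∈ X, A.le y x) → Y ∈ A.Con := by
  intro n
  induction n with
  | zero =>
    intro X hcard hX hXY _
    have hd : Y \ X = ∅ := (Set.ncard_eq_zero hYfin.diff).mp hcard
    have : Y = X := subset_antisymm (Set.diff_eq_empty.mp hd) hXY
    rwa [this]
  | succ n ih =>
    intro X hcard hX hXY hdom
    have hne : (Y \ X).Nonempty := Set.nonempty_of_ncard_ne_zero (by omega)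
    obtain ⟨y, hyY, hyX⟩ := hne
    obtain ⟨x, hxX, hle⟩ := hdom y hyY
    have hX' : X ∪ {y} ∈ A.Con := A.con_extend hX hle hxX
    refine ih (X ∪ {y}) ?_ hX' ?_ ?_
    · have he : Y \ (X ∪ {y}) = (Y \ X) \ {y} := by
        ext z
        simp only [Set.mem_diff, Set.mem_union, Set.mem_singleton_iff]
        tauto
      have hmem : y ∈ Y \ X := ⟨hyY, hyX⟩
      rw [he, Set.ncard_diff_singleton_of_mem hmem]
      omega
    · exact Set.union_subset hXY (by simpa using hyY)
    · intro y' hy'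
      obtain ⟨x', hx', hle'⟩ := hdom y' hy'
      exact ⟨x', Or.inl hx', hle'⟩

lemma ES.con_of_dominated (A : ES E) {X Y : Set E} (hYfin : Y.Finite) (hX : X ∈ A.Con)
    (hXY : X ⊆ Y) (hdom : ∀ y ∈ Y, ∃ x ∈ X, A.le y x) : Y ∈ A.Con :=
  A.con_of_dominated_aux hYfin _ X rfl hX hXY hdom

lemma dcl_config (A : ES E) {X : Set E} (hX : X ∈ A.Con) (hfin : X.Finite) :
    Config A {e | ∃ x ∈ X, A.le e x} := by
  constructor
  · refine A.con_of_dominated ?_ hX (fun x hx => ⟨x, hx, A.le_refl x⟩) (fun y hy => hy)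
    have he : {e | ∃ x ∈ X, A.le e x} = ⋃ x ∈ X, {e | A.le e x} := by
      ext z; simp
    rw [he]
    exact Set.Finite.biUnion hfin (fun x _ => A.causes_finite x)
  · rintro a ⟨x, hx, hax⟩ b hb
    exact ⟨x, hx, A.le_trans hb hax⟩

lemma downset_config (A : ES E) (e : E) : Config A {e' | A.le e' e} := by
  have h := dcl_config A (A.con_singleton e) (Set.finite_singleton e)
  have he : {e' | ∃ x ∈ ({e} : Set E), A.le e' x} = {e' | A.le e' e} := by
    ext z; simp
  rwa [he] at h

lemma config_finite {A : ES E} {x : Set E} (hx : Config A x) : x.Finite :=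
  A.con_finite x hx.1

lemma le_of_forall_config {A : ES E} {q p : E}
    (h : ∀ x, Config A x → p ∈ x → q ∈ x) : A.le q p :=
  h _ (downset_config A p) (A.le_refl p)

lemma downset_subset_config {A : ES E} {x : Set E} (hx : Config A x) {p : E} (hp : p ∈ x) :
    {e | A.le e p} ⊆ x := fun _ he => hx.2 hp he

lemma config_image {A : ES E} {B : ES F} {f : E → F} (hf : IsMap A B f) {x : Set E}
    (hx : Config A x) : Config B (f '' x) := hf.1 x hx

lemma map_reflects {A : ES E} {B : ES F} {f : E → F} (hf : IsMap A B f) {x : Set E}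
    (hx : Config A x) {q p : E} (hq : q ∈ x) (hp : p ∈ x)
    (hle : B.le (f q) (f p)) : A.le q p := by
  have hdc : Config A {e | A.le e p} := downset_config A p
  have himg : Config B (f '' {e | A.le e p}) := hf.1 _ hdc
  have hfp : f p ∈ f '' {e | A.le e p} := ⟨p, A.le_refl p, rfl⟩
  have hfq : f q ∈ f '' {e | A.le e p} := himg.2 hfp hle
  obtain ⟨q', hq', hq'e⟩ := hfq
  have hqq : q' = q := hf.2 x hx q' (downset_subset_config hx hp hq') q hq hq'e
  exact hqq ▸ hq'

lemma isMap_comp {A : ES E} {B : ES F} {C : ES G} {f : E → F} {g : F → G}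
    (hf : IsMap A B f) (hg : IsMap B C g) : IsMap A C (g ∘ f) := by
  constructor
  · intro x hx
    rw [Set.image_comp]
    exact hg.1 _ (hf.1 x hx)
  · intro x hx e he e' he' hee
    exact hf.2 x hx e he e' he'
      (hg.2 _ (hf.1 x hx) _ ⟨e, he, rfl⟩ _ ⟨e', he', rfl⟩ hee)

/-- The restriction of an event structure to a finite subset, made conflict-free. -/
def restES (A : ES E) (x : Set E) (hx : x.Finite) : ES ↥x where
  le a b := A.le a.1 b.1
  le_refl a := A.le_refl a.1
  le_trans h1 h2 := A.le_trans h1 h2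
  le_antisymm h1 h2 := Subtype.ext (A.le_antisymm h1 h2)
  Con := Set.univ
  con_empty := trivial
  causes_finite e := by
    have : Finite ↥x := hx.to_subtype
    exact Set.toFinite _
  con_finite X _ := by
    have : Finite ↥x := hx.to_subtype
    exact Set.toFinite X
  con_singleton _ := trivial
  con_mono _ _ := trivial
  con_extend _ _ _ := trivial

lemma restES_config_iff {A : ES E} {x : Set E} {hx : x.Finite} (hxc : Config A x)
    (c : Set ↥x) : Config (restES A x hx) c ↔ Config A (Subtype.val '' c) := by
  constructor
  · intro hc
    constructor
    · exact A.con_mono (by rintro _ ⟨a, _, rfl⟩; exact a.2) hxc.1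
    · rintro _ ⟨a, ha, rfl⟩ e' hle
      have he'x : e' ∈ x := hxc.2 a.2 hle
      have : (⟨e', he'x⟩ : ↥x) ∈ c := hc.2 ha (by exact hle)
      exact ⟨_, this, rfl⟩
  · intro hc
    constructor
    · trivial
    · intro a ha a' hle
      have : a'.1 ∈ Subtype.val '' c := hc.2 ⟨a, ha, rfl⟩ hle
      obtain ⟨b, hb, hbe⟩ := this
      have : b = a' := Subtype.ext hbe
      exact this ▸ hb

lemma restES_val_map {A : ES E} {x : Set E} {hx : x.Finite} (hxc : Config A x) :
    IsMap (restES A x hx) A Subtype.val := by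
  constructor
  · intro c hc
    exact (restES_config_iff hxc c).mp hc
  · intro c _ e _ e' _ h
    exact Subtype.ext h

lemma restES_univ_config {A : ES E} {x : Set E} {hx : x.Finite} (hxc : Config A x) :
    Config (restES A x hx) (Set.univ : Set ↥x) := by
  rw [restES_config_iff hxc]
  have : Subtype.val '' (Set.univ : Set ↥x) = x := by
    rw [Set.image_univ, Subtype.range_coe]
  rwa [this]

lemma invmap_exists {Et : ES F} {Eb : ES E} {W : ES G} {f : F → E} {g : G → E} {u : Set F}
    (hf : IsMap Et Eb f) (hfr : ∀ a b, Et.le a b → Eb.le (f a) (f b))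
    (hu : Config Et u) (hg : IsMap W Eb g)
    (hrange : ∀ w, ∃ a ∈ u, f a = g w) :
    ∃ k : G → F, IsMap W Et k ∧ (∀ w, k w ∈ u) ∧ (∀ w, f (k w) = g w) := by
  choose k hk1 hk2 using hrange
  have hkval : ∀ w (a : F), a ∈ u → f a = g w → a = k w := by
    intro w a ha hfa
    exact hf.2 u hu a ha (k w) (hk1 w) (by rw [hfa, hk2 w])
  refine ⟨k, ⟨?_, ?_⟩, hk1, hk2⟩
  · intro c hc
    constructor
    · exact Et.con_mono (by rintro _ ⟨w, _, rfl⟩; exact hk1 w) hu.1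
    · rintro _ ⟨w, hw, rfl⟩ a' hle
      have ha'u : a' ∈ u := hu.2 (hk1 w) hle
      have hgc : Config Eb (g '' c) := hg.1 c hc
      have : f a' ∈ g '' c := hgc.2 ⟨w, hw, rfl⟩ (by rw [← hk2 w]; exact hfr _ _ hle)
      obtain ⟨w', hw', hw'e⟩ := this
      have : a' = k w' := hkval w' a' ha'u hw'e.symm
      exact ⟨w', hw', this.symm⟩
  · intro c hc e he e' he' hee
    refine hg.2 c hc e he e' he' ?_
    rw [← hk2 e, ← hk2 e', hee]

lemma pb_unique {A B C P X : Type u} {EP : ES P} {EA : ES A} {EB : ES B} {EC : ES C}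
    {Pi1 : P → A} {Pi2 : P → B} {f : A → C} {g : B → C}
    (hP : IsPullbackES EP EA EB EC Pi1 Pi2 f g) (EX : ES X) {k₁ k₂ : X → P}
    (h1 : IsMap EX EP k₁) (h2 : IsMap EX EP k₂)
    (e1 : Pi1 ∘ k₁ = Pi1 ∘ k₂) (e2 : Pi2 ∘ k₁ = Pi2 ∘ k₂) : k₁ = k₂ := by
  obtain ⟨hp1, hp2, hcomm, hup⟩ := hP
  have c1 : IsMap EX EA (Pi1 ∘ k₁) := isMap_comp h1 hp1
  have c2 : IsMap EX EB (Pi2 ∘ k₁) := isMap_comp h1 hp2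
  have hcc : f ∘ (Pi1 ∘ k₁) = g ∘ (Pi2 ∘ k₁) := by
    funext w
    exact congrFun hcomm (k₁ w)
  obtain ⟨h, _, huniq⟩ := hup EX _ _ c1 c2 hcc
  have hk1 : k₁ = h := huniq k₁ ⟨h1, rfl, rfl⟩
  have hk2 : k₂ = h := huniq k₂ ⟨h2, e1.symm, e2.symm⟩
  rw [hk1, hk2]


section Stmt13Aux2

/-- The canonical member of `famOf` induced by a set. -/
def pairsOf (l r : F → E) (x : Set F) : Rel2 E := {p | ∃ aa ∈ x, p = (l aa, r aa)}

lemma pairsOf_mem_famOf {Et : ES F} {l r : F → E} {x : Set F} (hx : Config Et x) :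
    pairsOf l r x ∈ famOf Et l r := ⟨x, hx, rfl⟩

lemma mem_famOf_iff {Et : ES F} {l r : F → E} {θ : Rel2 E} :
    θ ∈ famOf Et l r ↔ ∃ x, Config Et x ∧ θ = pairsOf l r x := Iff.rfl

lemma mem_pairsOf {l r : F → E} {x : Set F} {aa : F} (h : aa ∈ x) :
    (l aa, r aa) ∈ pairsOf l r x := ⟨aa, h, rfl⟩

lemma rdom_pairsOf {l r : F → E} {x : Set F} : rdom (pairsOf l r x) = l '' x := by
  ext e
  constructor
  · rintro ⟨p, ⟨aa, ha, rfl⟩, rfl⟩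
    exact ⟨aa, ha, rfl⟩
  · rintro ⟨aa, ha, rfl⟩
    exact ⟨(l aa, r aa), ⟨aa, ha, rfl⟩, rfl⟩

lemma rran_pairsOf {l r : F → E} {x : Set F} : rran (pairsOf l r x) = r '' x := by
  ext e
  constructor
  · rintro ⟨p, ⟨aa, ha, rfl⟩, rfl⟩
    exact ⟨aa, ha, rfl⟩
  · rintro ⟨aa, ha, rfl⟩
    exact ⟨(l aa, r aa), ⟨aa, ha, rfl⟩, rfl⟩

lemma relInv_pairsOf {l r : F → E} {x : Set F} :
    relInv (pairsOf l r x) = pairsOf r l x := by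
  ext p
  constructor
  · rintro ⟨q, ⟨aa, ha, rfl⟩, rfl⟩
    exact ⟨aa, ha, rfl⟩
  · rintro ⟨aa, ha, rfl⟩
    exact ⟨(l aa, r aa), ⟨aa, ha, rfl⟩, rfl⟩

lemma relInv_relInv {θ : Rel2 E} : relInv (relInv θ) = θ := by
  ext p
  constructor
  · rintro ⟨q, ⟨q', hq', rfl⟩, rfl⟩
    simpa using hq'
  · intro hp
    exact ⟨p.swap, ⟨p, hp, rfl⟩, by simp⟩

lemma famOf_swap {Et : ES F} {l r : F → E}
    (hinv : ∀ θ ∈ famOf Et l r, relInv θ ∈ famOf Et l r) :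
    famOf Et r l = famOf Et l r := by
  ext θ
  constructor
  · rintro ⟨x, hx, rfl⟩
    have h := hinv _ (pairsOf_mem_famOf (l := l) (r := r) hx)
    rwa [relInv_pairsOf] at h
  · rintro ⟨x, hx, rfl⟩
    obtain ⟨x', hx', he⟩ := hinv _ (pairsOf_mem_famOf (l := l) (r := r) hx)
    refine ⟨x', hx', ?_⟩
    have he' : relInv (pairsOf l r x) = pairsOf l r x' := he
    have h2 := congrArg relInv he'
    rw [relInv_relInv, relInv_pairsOf] at h2
    exact h2

lemma relMap_pairsOf {f : E → G} {l r : F → E} {x : Set F} :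
    relMap f (pairsOf l r x) = pairsOf (f ∘ l) (f ∘ r) x := by
  ext p
  constructor
  · rintro ⟨q, ⟨aa, ha, rfl⟩, rfl⟩
    exact ⟨aa, ha, rfl⟩
  · rintro ⟨aa, ha, rfl⟩
    exact ⟨(l aa, r aa), ⟨aa, ha, rfl⟩, rfl⟩

lemma pairsOf_image {l r : F → E} {k : G → F} {x : Set G} :
    pairsOf l r (k '' x) = pairsOf (l ∘ k) (r ∘ k) x := by
  ext p
  constructor
  · rintro ⟨aa, ⟨b, hb, rfl⟩, rfl⟩
    exact ⟨b, hb, rfl⟩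
  · rintro ⟨b, hb, rfl⟩
    exact ⟨k b, ⟨b, hb, rfl⟩, rfl⟩

lemma pairsOf_congr {l r l' r' : F → E} {x : Set F}
    (hl : ∀ aa ∈ x, l aa = l' aa) (hr : ∀ aa ∈ x, r aa = r' aa) :
    pairsOf l r x = pairsOf l' r' x := by
  ext p
  constructor
  · rintro ⟨aa, ha, rfl⟩
    exact ⟨aa, ha, by rw [hl aa ha, hr aa ha]⟩
  · rintro ⟨aa, ha, rfl⟩
    exact ⟨aa, ha, by rw [hl aa ha, hr aa ha]⟩

lemma relId_eq_pairsOf {x : Set E} : relId x = pairsOf id id x := by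
  ext p
  constructor
  · rintro ⟨e, he, rfl⟩
    exact ⟨e, he, rfl⟩
  · rintro ⟨e, he, rfl⟩
    exact ⟨e, he, rfl⟩

lemma relMap_relId {f : E → G} {x : Set E} : relMap f (relId x) = relId (f '' x) := by
  ext p
  constructor
  · rintro ⟨q, ⟨e, he, rfl⟩, rfl⟩
    exact ⟨f e, ⟨e, he, rfl⟩, rfl⟩
  · rintro ⟨_, ⟨e, he, rfl⟩, rfl⟩
    exact ⟨(e, e), ⟨e, he, rfl⟩, rfl⟩

lemma insert_relId {x : Set E} {a : E} :
    insert (a, a) (relId x) = relId (insert a x) := by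
  ext p
  constructor
  · rintro (rfl | ⟨e, he, rfl⟩)
    · exact ⟨a, Set.mem_insert _ _, rfl⟩
    · exact ⟨e, Set.mem_insert_of_mem _ he, rfl⟩
  · rintro ⟨e, (rfl | he), rfl⟩
    · exact Set.mem_insert _ _
    · exact Set.mem_insert_of_mem _ ⟨e, he, rfl⟩

lemma rdom_relId {x : Set E} : rdom (relId x) = x := by
  ext e
  constructor
  · rintro ⟨p, ⟨e', he', rfl⟩, rfl⟩
    exact he'
  · intro he
    exact ⟨(e, e), ⟨e, he, rfl⟩, rfl⟩

lemma rdom_insert {θ : Rel2 E} {p : E × E} :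
    rdom (insert p θ) = insert p.1 (rdom θ) := by
  ext e
  constructor
  · rintro ⟨q, (rfl | hq), rfl⟩
    · exact Set.mem_insert _ _
    · exact Set.mem_insert_of_mem _ ⟨q, hq, rfl⟩
  · rintro (rfl | ⟨q, hq, rfl⟩)
    · exact ⟨p, Set.mem_insert _ _, rfl⟩
    · exact ⟨q, Set.mem_insert_of_mem _ hq, rfl⟩

/-- A step of the order-generation relation for a pullback. -/
def pbStep {SE' TE' PE' : Type u} (ES1 : ES SE') (ES2 : ES TE') (EP : ES PE') (Pi1 : PE' → SE') (Pi2 : PE' → TE')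
    (a b : PE') : Prop :=
  EP.le a b ∧ (ES1.le (Pi1 a) (Pi1 b) ∨ ES2.le (Pi2 a) (Pi2 b))

/-- The generated event structure (smaller order, same consistency). -/
def pbGenES {SE' TE' PE' : Type u} (ES1 : ES SE') (ES2 : ES TE') (EP : ES PE') (Pi1 : PE' → SE') (Pi2 : PE' → TE')
    (hstep_le : ∀ a b, Relation.ReflTransGen (pbStep ES1 ES2 EP Pi1 Pi2) a b → EP.le a b) :
    ES PE' where
  le := Relation.ReflTransGen (pbStep ES1 ES2 EP Pi1 Pi2)
  le_refl _ := Relation.ReflTransGen.refl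
  le_trans := Relation.ReflTransGen.trans
  le_antisymm h1 h2 := EP.le_antisymm (hstep_le _ _ h1) (hstep_le _ _ h2)
  Con := EP.Con
  con_empty := EP.con_empty
  causes_finite e := (EP.causes_finite e).subset (fun _ hq => hstep_le _ _ hq)
  con_finite := EP.con_finite
  con_singleton := EP.con_singleton
  con_mono := EP.con_mono
  con_extend h1 h2 h3 := EP.con_extend h1 (hstep_le _ _ h2) h3

lemma pb_le_gen {SE' TE' AE' PE' : Type u} {ES1 : ES SE'} {ES2 : ES TE'} {ESA : ES AE'}
    {EP : ES PE'} {Pi1 : PE' → SE'} {Pi2 : PE' → TE'} {f : SE' → AE'} {g : TE' → AE'}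
    (hP : IsPullbackES EP ES1 ES2 ESA Pi1 Pi2 f g) {q p : PE'} (hle : EP.le q p) :
    Relation.ReflTransGen (pbStep ES1 ES2 EP Pi1 Pi2) q p := by
  have hstep_le : ∀ a b, Relation.ReflTransGen (pbStep ES1 ES2 EP Pi1 Pi2) a b →
      EP.le a b := by
    intro a b h
    induction h with
    | refl => exact EP.le_refl _
    | tail _ hs ih => exact EP.le_trans ih hs.1
  set P2 : ES PE' := pbGenES ES1 ES2 EP Pi1 Pi2 hstep_le with hP2
  have hconfig_up : ∀ z, Config EP z → Config P2 z := by
    intro z hz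
    exact ⟨hz.1, fun e he e' hle' => hz.2 he (hstep_le _ _ hle')⟩
  have hdcl : ∀ z : Set PE', z ∈ EP.Con →
      Config EP {e | ∃ x ∈ z, EP.le e x} ∧ z ⊆ {e | ∃ x ∈ z, EP.le e x} := by
    intro z hz
    exact ⟨dcl_config EP hz (EP.con_finite z hz),
      fun e he => ⟨e, he, EP.le_refl e⟩⟩
  have hPi1 : IsMap P2 ES1 Pi1 := by
    constructor
    · intro z hz
      obtain ⟨hzb, hsub⟩ := hdcl z hz.1
      constructor
      · exact ES1.con_mono (Set.image_mono hsub) (hP.1.1 _ hzb).1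
      · rintro _ ⟨e, he, rfl⟩ a' hle'
        have h1 : a' ∈ Pi1 '' {e | ∃ x ∈ z, EP.le e x} :=
          (hP.1.1 _ hzb).2 ⟨e, hsub he, rfl⟩ hle'
        obtain ⟨e', he', rfl⟩ := h1
        have hlee : EP.le e' e := map_reflects hP.1 hzb he' (hsub he) hle'
        exact ⟨e', hz.2 he (Relation.ReflTransGen.single ⟨hlee, Or.inl hle'⟩), rfl⟩
    · intro z hz e he e' he' hee
      obtain ⟨hzb, hsub⟩ := hdcl z hz.1
      exact hP.1.2 _ hzb e (hsub he) e' (hsub he') hee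
  have hPi2 : IsMap P2 ES2 Pi2 := by
    constructor
    · intro z hz
      obtain ⟨hzb, hsub⟩ := hdcl z hz.1
      constructor
      · exact ES2.con_mono (Set.image_mono hsub) (hP.2.1.1 _ hzb).1
      · rintro _ ⟨e, he, rfl⟩ a' hle'
        have h1 : a' ∈ Pi2 '' {e | ∃ x ∈ z, EP.le e x} :=
          (hP.2.1.1 _ hzb).2 ⟨e, hsub he, rfl⟩ hle'
        obtain ⟨e', he', rfl⟩ := h1
        have hlee : EP.le e' e := map_reflects hP.2.1 hzb he' (hsub he) hle'
        exact ⟨e', hz.2 he (Relation.ReflTransGen.single ⟨hlee, Or.inr hle'⟩), rfl⟩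
    · intro z hz e he e' he' hee
      obtain ⟨hzb, hsub⟩ := hdcl z hz.1
      exact hP.2.1.2 _ hzb e (hsub he) e' (hsub he') hee
  obtain ⟨h, ⟨hmap, hc1, hc2⟩, _⟩ := hP.2.2.2 P2 Pi1 Pi2 hPi1 hPi2 hP.2.2.1
  have hid : ∀ e, h e = e := by
    intro e
    have hde : Config EP {e' | EP.le e' e} := downset_config EP e
    have hfin := config_finite hde
    have hval : IsMap (restES EP _ hfin) EP Subtype.val := restES_val_map hde
    have hval2 : IsMap (restES EP _ hfin) P2 Subtype.val := by
      refine ⟨fun c hc => hconfig_up _ ((restES_config_iff hde c).mp hc), ?_⟩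
      intro c hc a _ b _ hab
      exact Subtype.ext hab
    have heq : (h ∘ Subtype.val) = (Subtype.val : ↥{e' | EP.le e' e} → PE') := by
      refine pb_unique hP (restES EP _ hfin) (isMap_comp hval2 hmap) hval ?_ ?_
      · funext w
        exact congrFun hc1 w.1
      · funext w
        exact congrFun hc2 w.1
    exact congrFun heq ⟨e, EP.le_refl e⟩
  have hDc : Config P2 {a | Relation.ReflTransGen (pbStep ES1 ES2 EP Pi1 Pi2) a p} := by
    constructor
    · exact EP.con_mono (fun a ha => hstep_le _ _ ha) (downset_config EP p).1
    · intro a ha b hb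
      exact Relation.ReflTransGen.trans hb ha
  have hDP : Config EP {a | Relation.ReflTransGen (pbStep ES1 ES2 EP Pi1 Pi2) a p} := by
    have hcfg := hmap.1 _ hDc
    have himg : h '' {a | Relation.ReflTransGen (pbStep ES1 ES2 EP Pi1 Pi2) a p} =
        {a | Relation.ReflTransGen (pbStep ES1 ES2 EP Pi1 Pi2) a p} := by
      ext b
      constructor
      · rintro ⟨a, ha, rfl⟩
        rwa [hid a]
      · intro hb
        exact ⟨b, hb, hid b⟩
    rwa [himg] at hcfg
  exact hDP.2 (show p ∈ _ from Relation.ReflTransGen.refl) hle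

lemma pb_rigid {StE' TtE' AtE' SE' TE' PE' PtE' : Type u}
    {St : ES StE'} {Tt : ES TtE'} {At : ES AtE'} {S : ES SE'} {T : ES TE'}
    {P : ES PE'} {Pt : ES PtE'}
    {Pit1 : PtE' → StE'} {Pit2 : PtE' → TtE'} {sigt : StE' → AtE'} {taut : TtE' → AtE'}
    {Pi1 : PE' → SE'} {Pi2 : PE' → TE'} {l : PtE' → PE'} {lS : StE' → SE'} {lT : TtE' → TE'}
    (hPt : IsPullbackES Pt St Tt At Pit1 Pit2 sigt taut)
    (hP1 : IsMap P S Pi1) (hP2 : IsMap P T Pi2)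
    (hl : IsMap Pt P l) (hl1 : Pi1 ∘ l = lS ∘ Pit1) (hl2 : Pi2 ∘ l = lT ∘ Pit2)
    (hlSr : ∀ a b, St.le a b → S.le (lS a) (lS b))
    (hlTr : ∀ a b, Tt.le a b → T.le (lT a) (lT b)) :
    ∀ a b, Pt.le a b → P.le (l a) (l b) := by
  intro a b hab
  have hgen := pb_le_gen hPt hab
  clear hab
  induction hgen with
  | refl => exact P.le_refl _
  | @tail c b' hrtg hstep ih =>
    obtain ⟨hle, hst⟩ := hstep
    have hdb : Config Pt {e | Pt.le e b'} := downset_config Pt b'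
    have himg := hl.1 _ hdb
    have hmc : l c ∈ l '' {e | Pt.le e b'} := ⟨c, hle, rfl⟩
    have hmb : l b' ∈ l '' {e | Pt.le e b'} := ⟨b', Pt.le_refl b', rfl⟩
    have hstep' : P.le (l c) (l b') := by
      cases hst with
      | inl hS =>
        have h1 : S.le (Pi1 (l c)) (Pi1 (l b')) := by
          have e1 : Pi1 (l c) = lS (Pit1 c) := congrFun hl1 c
          have e2 : Pi1 (l b') = lS (Pit1 b') := congrFun hl1 b'
          rw [e1, e2]
          exact hlSr _ _ hS
        exact map_reflects hP1 himg hmc hmb h1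
      | inr hT =>
        have h1 : T.le (Pi2 (l c)) (Pi2 (l b')) := by
          have e1 : Pi2 (l c) = lT (Pit2 c) := congrFun hl2 c
          have e2 : Pi2 (l b') = lT (Pit2 b') := congrFun hl2 b'
          rw [e1, e2]
          exact hlTr _ _ hT
        exact map_reflects hP2 himg hmc hmb h1
    exact P.le_trans ih hstep'
section Stmt13Aux3

lemma pairs_insert_realize {l r : F → E}
    (hjm : ∀ a a', l a = l a' → r a = r a' → a = a') {x w : Set F} {t₁ t₂ : E}
    (hnotin : (t₁, t₂) ∉ pairsOf l r x)
    (heq : pairsOf l r w = insert (t₁, t₂) (pairsOf l r x)) :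
    ∃ t, t ∉ x ∧ w = insert t x ∧ l t = t₁ ∧ r t = t₂ := by
  have hmem : (t₁, t₂) ∈ pairsOf l r w := by rw [heq]; exact Set.mem_insert _ _
  obtain ⟨t, htw, hte⟩ := hmem
  have hl1 : l t = t₁ := (congrArg Prod.fst hte).symm
  have hr1 : r t = t₂ := (congrArg Prod.snd hte).symm
  have htx : t ∉ x := by
    intro h
    exact hnotin (by rw [← hl1, ← hr1]; exact mem_pairsOf h)
  refine ⟨t, htx, ?_, hl1, hr1⟩
  apply subset_antisymm
  · intro b hb
    have : (l b, r b) ∈ insert (t₁, t₂) (pairsOf l r x) := by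
      rw [← heq]; exact mem_pairsOf hb
    rcases this with h | ⟨b', hb', he⟩
    · have hbl : l b = t₁ := congrArg Prod.fst h
      have hbr : r b = t₂ := congrArg Prod.snd h
      have : b = t := hjm b t (by rw [hbl, hl1]) (by rw [hbr, hr1])
      exact this ▸ Set.mem_insert _ _
    · have : b = b' := hjm b b' (congrArg Prod.fst he) (congrArg Prod.snd he)
      exact Set.mem_insert_of_mem _ (this ▸ hb')
  · intro b hb
    rcases hb with rfl | hb
    · exact htw
    · have : (l b, r b) ∈ pairsOf l r w := by
        rw [heq]; exact Set.mem_insert_of_mem _ (mem_pairsOf hb)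
      obtain ⟨b', hb', he⟩ := this
      have : b = b' := hjm b b' (congrArg Prod.fst he) (congrArg Prod.snd he)
      exact this ▸ hb'

lemma recep_of_strong {TE' AE' TtE' : Type u} {PT : ESP TE'} {B : ESP AE'} {Tt : ES TtE'}
    {lT rT : TtE' → TE'} {τ : TE' → AE'} {SA : Set (Rel2 AE')}
    (hlTm : IsMap Tt PT.toES lT)
    (hidT : ∀ x, Config PT.toES x → relId x ∈ famOf Tt lT rT)
    (hidA : ∀ z, Config B.toES z → relId z ∈ SA)
    (hstr : StrongReceptive PT (famOf Tt lT rT) B SA τ) :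
    ∀ x a, Config PT.toES x → B.pol a = false → a ∉ τ '' x →
      Config B.toES (insert a (τ '' x)) →
      ∃! t, t ∉ x ∧ Config PT.toES (insert t x) ∧ τ t = a := by
  intro x a hx hpol hnotin hins
  have hθ : relId x ∈ famOf Tt lT rT := hidT x hx
  have hrm : relMap τ (relId x) = relId (τ '' x) := relMap_relId
  have hnot2 : (a, a) ∉ relMap τ (relId x) := by
    rw [hrm]
    rintro ⟨e, he, hee⟩
    have hea : e = a := congrArg Prod.fst hee
    exact hnotin (hea ▸ he)
  have hins2 : insert (a, a) (relMap τ (relId x)) ∈ SA := by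
    rw [hrm, insert_relId]
    exact hidA _ hins
  obtain ⟨⟨t₁, t₂⟩, ⟨hmem, hτ1, hτ2⟩, huniq⟩ := hstr _ hθ a a hpol hpol hnot2 hins2
  have hcover : t₁ ∉ x ∧ Config PT.toES (insert t₁ x) := by
    have ht₁x : t₁ ∉ x := fun h => hnotin ⟨t₁, h, hτ1⟩
    obtain ⟨w, hw, he⟩ := hmem
    have he' : insert (t₁, t₂) (relId x) = pairsOf lT rT w := he
    have hrd : lT '' w = insert t₁ x := by
      have h1 : rdom (pairsOf lT rT w) = rdom (insert (t₁, t₂) (relId x)) := by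
        rw [he']
      rw [rdom_pairsOf, rdom_insert, rdom_relId] at h1
      exact h1
    have himg := hlTm.1 w hw
    rw [hrd] at himg
    exact ⟨ht₁x, himg⟩
  refine ⟨t₁, ⟨hcover.1, hcover.2, hτ1⟩, ?_⟩
  intro t ⟨htn, htc, htτ⟩
  have hmemt : insert (t, t) (relId x) ∈ famOf Tt lT rT := by
    rw [insert_relId]
    exact hidT _ htc
  have := huniq (t, t) ⟨hmemt, htτ, htτ⟩
  exact congrArg Prod.fst this

lemma rigid_image_downset {E' P' : Type u} {Pt : ES E'} {P : ES P'} {l : E' → P'}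
    (hl : IsMap Pt P l) (hlrig : ∀ a b, Pt.le a b → P.le (l a) (l b)) (p : E') :
    l '' {e | Pt.le e p} = {e | P.le e (l p)} := by
  apply subset_antisymm
  · rintro _ ⟨e, he, rfl⟩
    exact hlrig e p he
  · intro a ha
    exact (hl.1 _ (downset_config Pt p)).2 ⟨p, Pt.le_refl p, rfl⟩ ha

lemma mkMember {X' StE' TtE' AtE' PE' PtE' SE' TE' AE' : Type u}
    {St : ES StE'} {Tt : ES TtE'} {At : ES AtE'} {P : ES PE'}
    {Pt : ES PtE'} {S : ES SE'} {T : ES TE'} {A : ES AE'}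
    {Pit1 : PtE' → StE'} {Pit2 : PtE' → TtE'} {sigt : StE' → AtE'} {taut : TtE' → AtE'}
    {Pi1 : PE' → SE'} {Pi2 : PE' → TE'} {σ : SE' → AE'} {τ : TE' → AE'}
    {l r : PtE' → PE'} {lS rS : StE' → SE'} {lT rT : TtE' → TE'}
    (hP : IsPullbackES P S T A Pi1 Pi2 σ τ)
    (hPt : IsPullbackES Pt St Tt At Pit1 Pit2 sigt taut)
    (hl : IsMap Pt P l) (hl1 : Pi1 ∘ l = lS ∘ Pit1) (hl2 : Pi2 ∘ l = lT ∘ Pit2)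
    (hr : IsMap Pt P r) (hr1 : Pi1 ∘ r = rS ∘ Pit1) (hr2 : Pi2 ∘ r = rT ∘ Pit2)
    (W : ES X') (k₁ : X' → StE') (k₂ : X' → TtE')
    (hk₁ : IsMap W St k₁) (hk₂ : IsMap W Tt k₂) (hcomm : sigt ∘ k₁ = taut ∘ k₂)
    {g₁ g₂ : X' → PE'} (hg₁ : IsMap W P g₁) (hg₂ : IsMap W P g₂)
    (e1l : ∀ w, lS (k₁ w) = Pi1 (g₁ w)) (e1r : ∀ w, rS (k₁ w) = Pi1 (g₂ w))
    (e2l : ∀ w, lT (k₂ w) = Pi2 (g₁ w)) (e2r : ∀ w, rT (k₂ w) = Pi2 (g₂ w)) :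
    ∃ m : X' → PtE', IsMap W Pt m ∧ Pit1 ∘ m = k₁ ∧ Pit2 ∘ m = k₂ ∧
      l ∘ m = g₁ ∧ r ∘ m = g₂ := by
  obtain ⟨m, ⟨hm, hm1, hm2⟩, _⟩ := hPt.2.2.2 W k₁ k₂ hk₁ hk₂ hcomm
  refine ⟨m, hm, hm1, hm2, ?_, ?_⟩
  · refine pb_unique hP W (isMap_comp hm hl) hg₁ ?_ ?_
    · funext w
      have a1 : Pi1 (l (m w)) = lS (Pit1 (m w)) := congrFun hl1 (m w)
      have a2 : Pit1 (m w) = k₁ w := congrFun hm1 w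
      show Pi1 (l (m w)) = Pi1 (g₁ w)
      rw [a1, a2, e1l w]
    · funext w
      have a1 : Pi2 (l (m w)) = lT (Pit2 (m w)) := congrFun hl2 (m w)
      have a2 : Pit2 (m w) = k₂ w := congrFun hm2 w
      show Pi2 (l (m w)) = Pi2 (g₁ w)
      rw [a1, a2, e2l w]
  · refine pb_unique hP W (isMap_comp hm hr) hg₂ ?_ ?_
    · funext w
      have a1 : Pi1 (r (m w)) = rS (Pit1 (m w)) := congrFun hr1 (m w)
      have a2 : Pit1 (m w) = k₁ w := congrFun hm1 w
      show Pi1 (r (m w)) = Pi1 (g₂ w)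
      rw [a1, a2, e1r w]
    · funext w
      have a1 : Pi2 (r (m w)) = rT (Pit2 (m w)) := congrFun hr2 (m w)
      have a2 : Pit2 (m w) = k₂ w := congrFun hm2 w
      show Pi2 (r (m w)) = Pi2 (g₂ w)
      rw [a1, a2, e2r w]

end Stmt13Aux3
section Stmt13Aux4

lemma pb_jointly_monic {StE' TtE' AtE' SE' TE' AE' PE' PtE' : Type u}
    {St : ES StE'} {Tt : ES TtE'} {At : ES AtE'} {S : ES SE'} {T : ES TE'} {A : ES AE'}
    {P : ES PE'} {Pt : ES PtE'}
    {Pit1 : PtE' → StE'} {Pit2 : PtE' → TtE'} {sigt : StE' → AtE'} {taut : TtE' → AtE'}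
    {Pi1 : PE' → SE'} {Pi2 : PE' → TE'} {σ : SE' → AE'} {τ : TE' → AE'}
    {l r : PtE' → PE'} {lS rS : StE' → SE'} {lT rT : TtE' → TE'}
    (hP : IsPullbackES P S T A Pi1 Pi2 σ τ)
    (hPt : IsPullbackES Pt St Tt At Pit1 Pit2 sigt taut)
    (hl : IsMap Pt P l) (hl1 : Pi1 ∘ l = lS ∘ Pit1) (hl2 : Pi2 ∘ l = lT ∘ Pit2)
    (hr : IsMap Pt P r) (hr1 : Pi1 ∘ r = rS ∘ Pit1) (hr2 : Pi2 ∘ r = rT ∘ Pit2)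
    (hlrig : ∀ a b, Pt.le a b → P.le (l a) (l b))
    (hrrig : ∀ a b, Pt.le a b → P.le (r a) (r b))
    (hlSm : IsMap St S lS) (hlTm : IsMap Tt T lT)
    (hjmS : ∀ a a', lS a = lS a' → rS a = rS a' → a = a')
    (hjmT : ∀ a a', lT a = lT a' → rT a = rT a' → a = a') :
    ∀ p q, l p = l q → r p = r q → p = q := by
  intro p q hlpq hrpq
  have hstep_le : ∀ a b, Relation.ReflTransGen (pbStep St Tt Pt Pit1 Pit2) a b →
      Pt.le a b := by
    intro a b h
    induction h with
    | refl => exact Pt.le_refl _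
    | tail _ hs ih2 => exact Pt.le_trans ih2 hs.1
  have hDp : Config Pt {e | Pt.le e p} := downset_config Pt p
  have hDq : Config Pt {e | Pt.le e q} := downset_config Pt q
  have hy : Config P {e | P.le e (l p)} := downset_config P (l p)
  have hyfin := config_finite hy
  have hval : IsMap (restES P _ hyfin) P Subtype.val := restES_val_map hy
  have hrangep : ∀ w : ↥{e | P.le e (l p)}, ∃ a ∈ {e | Pt.le e p}, l a = w.1 := by
    intro w
    have hw : w.1 ∈ l '' {e | Pt.le e p} := by
      rw [rigid_image_downset hl hlrig p]; exact w.2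
    obtain ⟨a, ha, he⟩ := hw
    exact ⟨a, ha, he⟩
  have hrangeq : ∀ w : ↥{e | P.le e (l p)}, ∃ a ∈ {e | Pt.le e q}, l a = w.1 := by
    intro w
    have hw : w.1 ∈ l '' {e | Pt.le e q} := by
      rw [rigid_image_downset hl hlrig q, ← hlpq]; exact w.2
    obtain ⟨a, ha, he⟩ := hw
    exact ⟨a, ha, he⟩
  obtain ⟨φp, hφpm, hφpmem, hφpval⟩ := invmap_exists hl hlrig hDp hval hrangep
  obtain ⟨φq, hφqm, hφqmem, hφqval⟩ := invmap_exists hl hlrig hDq hval hrangeq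
  have sq1l : ∀ e, Pi1 (l e) = lS (Pit1 e) := fun e => congrFun hl1 e
  have sq2l : ∀ e, Pi2 (l e) = lT (Pit2 e) := fun e => congrFun hl2 e
  have sq1r : ∀ e, Pi1 (r e) = rS (Pit1 e) := fun e => congrFun hr1 e
  have sq2r : ∀ e, Pi2 (r e) = rT (Pit2 e) := fun e => congrFun hr2 e
  have htop1 : Pit1 p = Pit1 q := by
    apply hjmS
    · rw [← sq1l p, ← sq1l q, hlpq]
    · rw [← sq1r p, ← sq1r q, hrpq]
  have htop2 : Pit2 p = Pit2 q := by
    apply hjmT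
    · rw [← sq2l p, ← sq2l q, hlpq]
    · rw [← sq2r p, ← sq2r q, hrpq]
  have hUq : Config St (Pit1 '' {e | Pt.le e q}) := hPt.1.1 _ hDq
  have hVq : Config Tt (Pit2 '' {e | Pt.le e q}) := hPt.2.1.1 _ hDq
  have hYr : Config P {e | P.le e (r p)} := downset_config P (r p)
  have key : ∀ α, Relation.ReflTransGen (pbStep St Tt Pt Pit1 Pit2) α p →
      ∀ hy' : l α ∈ {e | P.le e (l p)},
        Pit1 α = Pit1 (φq ⟨l α, hy'⟩) ∧ Pit2 α = Pit2 (φq ⟨l α, hy'⟩) ∧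
          r α = r (φq ⟨l α, hy'⟩) := by
    intro α hrtg
    induction hrtg using Relation.ReflTransGen.head_induction_on with
    | refl =>
      intro hy'
      have hβq : φq ⟨l p, hy'⟩ = q := by
        apply hl.2 _ hDq _ (hφqmem _) q (Pt.le_refl q)
        rw [hφqval ⟨l p, hy'⟩]
        exact hlpq
      rw [hβq]
      exact ⟨htop1, htop2, hrpq⟩
    | @head α' c hstep hrtg' ih =>
      intro hy'
      have hlec : Pt.le c p := hstep_le _ _ hrtg'
      have hleα : Pt.le α' p := Pt.le_trans hstep.1 hlec
      have hyc : l c ∈ {e | P.le e (l p)} := hlrig c p hlec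
      obtain ⟨ihc1, ihc2, _⟩ := ih hyc
      have hββ : l (φq ⟨l α', hy'⟩) = l α' := hφqval _
      have hββc : l (φq ⟨l c, hyc⟩) = l c := hφqval _
      have hβmem : φq ⟨l α', hy'⟩ ∈ {e | Pt.le e q} := hφqmem _
      have hβcmem : φq ⟨l c, hyc⟩ ∈ {e | Pt.le e q} := hφqmem _
      have hlSeq : lS (Pit1 α') = lS (Pit1 (φq ⟨l α', hy'⟩)) := by
        rw [← sq1l α', ← sq1l (φq ⟨l α', hy'⟩), hββ]
      have hlTeq : lT (Pit2 α') = lT (Pit2 (φq ⟨l α', hy'⟩)) := by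
        rw [← sq2l α', ← sq2l (φq ⟨l α', hy'⟩), hββ]
      have hrmem1 : r α' ∈ {e | P.le e (r p)} := hrrig α' p hleα
      have hrmem2 : r (φq ⟨l α', hy'⟩) ∈ {e | P.le e (r p)} := by
        have h0 : P.le (r (φq ⟨l α', hy'⟩)) (r q) := hrrig _ q hβmem
        rw [← hrpq] at h0
        exact h0
      have hrα1 : Pit1 α' = Pit1 (φq ⟨l α', hy'⟩) → r α' = r (φq ⟨l α', hy'⟩) := by
        intro h1
        apply hP.1.2 _ hYr _ hrmem1 _ hrmem2
        rw [sq1r α', sq1r (φq ⟨l α', hy'⟩), h1]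
      have hrα2 : Pit2 α' = Pit2 (φq ⟨l α', hy'⟩) → r α' = r (φq ⟨l α', hy'⟩) := by
        intro h2
        apply hP.2.1.2 _ hYr _ hrmem1 _ hrmem2
        rw [sq2r α', sq2r (φq ⟨l α', hy'⟩), h2]
      have cross12 : Pit1 α' = Pit1 (φq ⟨l α', hy'⟩) →
          Pit2 α' = Pit2 (φq ⟨l α', hy'⟩) := by
        intro h1
        have hr' := hrα1 h1
        apply hjmT _ _ hlTeq
        rw [← sq2r α', ← sq2r (φq ⟨l α', hy'⟩), hr']
      have cross21 : Pit2 α' = Pit2 (φq ⟨l α', hy'⟩) →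
          Pit1 α' = Pit1 (φq ⟨l α', hy'⟩) := by
        intro h2
        have hr' := hrα2 h2
        apply hjmS _ _ hlSeq
        rw [← sq1r α', ← sq1r (φq ⟨l α', hy'⟩), hr']
      rcases hstep.2 with hS | hT
      · have h1 : Pit1 α' = Pit1 (φq ⟨l α', hy'⟩) := by
          apply hlSm.2 _ hUq
          · have hle2 : St.le (Pit1 α') (Pit1 (φq ⟨l c, hyc⟩)) := by
              rw [← ihc1]; exact hS
            exact hUq.2 ⟨_, hβcmem, rfl⟩ hle2
          · exact ⟨_, hβmem, rfl⟩
          · exact hlSeq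
        exact ⟨h1, cross12 h1, hrα1 h1⟩
      · have h2 : Pit2 α' = Pit2 (φq ⟨l α', hy'⟩) := by
          apply hlTm.2 _ hVq
          · have hle2 : Tt.le (Pit2 α') (Pit2 (φq ⟨l c, hyc⟩)) := by
              rw [← ihc2]; exact hT
            exact hVq.2 ⟨_, hβcmem, rfl⟩ hle2
          · exact ⟨_, hβmem, rfl⟩
          · exact hlTeq
        exact ⟨cross21 h2, h2, hrα2 h2⟩
  have hkey' : ∀ w : ↥{e | P.le e (l p)},
      Pit1 (φp w) = Pit1 (φq w) ∧ Pit2 (φp w) = Pit2 (φq w) := by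
    intro w
    have hle : Pt.le (φp w) p := hφpmem w
    have hrtg := pb_le_gen hPt hle
    have hyw : l (φp w) ∈ {e | P.le e (l p)} := by rw [hφpval w]; exact w.2
    obtain ⟨h1, h2, _⟩ := key _ hrtg hyw
    have hsub : (⟨l (φp w), hyw⟩ : ↥{e | P.le e (l p)}) = w := Subtype.ext (hφpval w)
    rw [hsub] at h1 h2
    exact ⟨h1, h2⟩
  have hφeq : φp = φq := pb_unique hPt (restES P _ hyfin) hφpm hφqm
    (funext fun w => (hkey' w).1) (funext fun w => (hkey' w).2)
  have hyp : l p ∈ {e | P.le e (l p)} := P.le_refl _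
  have h1 : φp ⟨l p, hyp⟩ = p := by
    apply hl.2 _ hDp _ (hφpmem _) p (Pt.le_refl p)
    rw [hφpval]
  have h2 : φq ⟨l p, hyp⟩ = q := by
    apply hl.2 _ hDq _ (hφqmem _) q (Pt.le_refl q)
    rw [hφqval]
    exact hlpq
  rw [← h1, hφeq, h2]

end Stmt13Aux4
section Stmt13Aux5

lemma pairsOf_insert {l r : F → E} {x : Set F} {a : F} :
    pairsOf l r (insert a x) = insert (l a, r a) (pairsOf l r x) := by
  ext p
  constructor
  · rintro ⟨b, (rfl | hb), rfl⟩
    · exact Set.mem_insert _ _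
    · exact Set.mem_insert_of_mem _ (mem_pairsOf hb)
  · rintro (rfl | ⟨b, hb, rfl⟩)
    · exact ⟨a, Set.mem_insert _ _, rfl⟩
    · exact ⟨b, Set.mem_insert_of_mem _ hb, rfl⟩

lemma cover_lift {Et : ES F} {Eb : ES E} {f : F → E} (hfm : IsMap Et Eb f)
    {x x₁ : Set F} {y₀ : Set E} {anew : E}
    (hx₁ : Config Et x₁) (hsub : x ⊆ x₁)
    (himg0 : f '' x = y₀) (himg1 : f '' x₁ = insert anew y₀) (hnot : anew ∉ y₀) :
    ∃ s, s ∉ x ∧ x₁ = insert s x ∧ f s = anew := by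
  have hmem : anew ∈ f '' x₁ := by rw [himg1]; exact Set.mem_insert _ _
  obtain ⟨s, hs, hse⟩ := hmem
  have hsx : s ∉ x := by
    intro h
    exact hnot (himg0 ▸ ⟨s, h, hse⟩)
  refine ⟨s, hsx, ?_, hse⟩
  apply subset_antisymm
  · intro b hb
    have hfb : f b ∈ insert anew y₀ := himg1 ▸ ⟨b, hb, rfl⟩
    rcases hfb with hfb | hfb
    · have : b = s := hfm.2 _ hx₁ b hb s hs (by rw [hfb, hse])
      exact this ▸ Set.mem_insert _ _
    · rw [← himg0] at hfb
      obtain ⟨b', hb', hbe⟩ := hfb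
      have : b = b' := hfm.2 _ hx₁ b hb b' (hsub hb') hbe.symm
      exact Set.mem_insert_of_mem _ (this ▸ hb')
  · intro b hb
    rcases hb with rfl | hb
    · exact hs
    · exact hsub hb

lemma es_exists_min (A : ES E) {d : Set E} (hfin : d.Finite) (hne : d.Nonempty) :
    ∃ e ∈ d, ∀ e' ∈ d, A.le e' e → e' = e := by
  classical
  obtain ⟨n, hn⟩ : ∃ n, d.ncard = n := ⟨_, rfl⟩
  induction n using Nat.strong_induction_on generalizing d with
  | _ n ih =>
    obtain ⟨e₀, he₀⟩ := hne
    by_cases hmin : ∀ e' ∈ d, A.le e' e₀ → e' = e₀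
    · exact ⟨e₀, he₀, hmin⟩
    · push_neg at hmin
      obtain ⟨e₁, he₁, hle₁, hne₁⟩ := hmin
      set d' := {e ∈ d | A.le e e₀ ∧ e ≠ e₀} with hd'
      have hd'sub : d' ⊆ d := fun e he => he.1
      have hd'fin : d'.Finite := hfin.subset hd'sub
      have hd'ne : d'.Nonempty := ⟨e₁, he₁, hle₁, hne₁⟩
      have hcard : d'.ncard < n := by
        rw [← hn]
        apply Set.ncard_lt_ncard _ hfin
        exact ⟨hd'sub, fun hsup => (hsup he₀).2.2 rfl⟩
      obtain ⟨e, he, hemin⟩ := ih _ hcard hd'fin hd'ne rfl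
      refine ⟨e, he.1, ?_⟩
      intro e' he' hle'
      have hene : e ≠ e₀ := he.2.2
      have he'0 : A.le e' e₀ := A.le_trans hle' he.2.1
      have he'ne : e' ≠ e₀ := by
        rintro rfl
        exact hene (A.le_antisymm he.2.1 hle')
      exact hemin e' ⟨he', he'0, he'ne⟩ hle'

lemma relMap_pairs_square {H' : Type u} {f : E → G} {l r : F → E} {k : F → H'}
    {lA rA : H' → G} (h1 : ∀ b, f (l b) = lA (k b)) (h2 : ∀ b, f (r b) = rA (k b))
    {v : Set F} : relMap f (pairsOf l r v) = pairsOf lA rA (k '' v) := by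
  rw [relMap_pairsOf, pairsOf_image]
  exact pairsOf_congr (fun b _ => h1 b) (fun b _ => h2 b)

end Stmt13Aux5
section Stmt13Aux6

variable {SE' TE' AE' StE' TtE' AtE' PE' PtE' : Type u}

lemma pb_open_step
    {S : ESP SE'} {T : ESP TE'} {A : ESP AE'}
    {St : ES StE'} {Tt : ES TtE'} {At : ES AtE'}
    {P : ES PE'} {Pt : ES PtE'}
    {lS rS : StE' → SE'} {lT rT : TtE' → TE'} {lA rA : AtE' → AE'}
    {σ : SE' → AE'} {τ : TE' → AE'} {sigt : StE' → AtE'} {taut : TtE' → AtE'}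
    {Pi1 : PE' → SE'} {Pi2 : PE' → TE'} {Pit1 : PtE' → StE'} {Pit2 : PtE' → TtE'}
    {l : PtE' → PE'}
    (hlSo : OpenMap St S.toES lS) (hlTo : OpenMap Tt T.toES lT)
    (hjmS : ∀ a a', lS a = lS a' → rS a = rS a' → a = a')
    (hjmT : ∀ a a', lT a = lT a' → rT a = rT a' → a = a')
    (hjmA : ∀ a a', lA a = lA a' → rA a = rA a' → a = a')
    (hpolA : ∀ aa, A.pol (lA aa) = A.pol (rA aa))
    (hidS : ∀ x, Config S.toES x → relId x ∈ famOf St lS rS)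
    (hidT : ∀ x, Config T.toES x → relId x ∈ famOf Tt lT rT)
    (hidA : ∀ z, Config A.toES z → relId z ∈ famOf At lA rA)
    (hσm : IsMap S.toES A.toES σ) (hτm : IsMap T.toES A.toES τ)
    (hσr : StrongReceptive S (famOf St lS rS) A (famOf At lA rA) σ)
    (hτr : StrongReceptive T (famOf Tt lT rT) A.dual (famOf At lA rA) τ)
    (hsigt : IsMap St At sigt) (htaut : IsMap Tt At taut)
    (hsq1 : ∀ ss, lA (sigt ss) = σ (lS ss)) (hsq2 : ∀ ss, rA (sigt ss) = σ (rS ss))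
    (hsq3 : ∀ tt, lA (taut tt) = τ (lT tt)) (hsq4 : ∀ tt, rA (taut tt) = τ (rT tt))
    (hP : IsPullbackES P S.toES T.toES A.toES Pi1 Pi2 σ τ)
    (hPt : IsPullbackES Pt St Tt At Pit1 Pit2 sigt taut)
    (hl : IsMap Pt P l) (hl1 : Pi1 ∘ l = lS ∘ Pit1) (hl2 : Pi2 ∘ l = lT ∘ Pit2)
    {xt : Set PtE'} {e : PE'}
    (hxt : Config Pt xt) (hy₁ : Config P (insert e (l '' xt))) (hen : e ∉ l '' xt) :
    ∃ xt₁, Config Pt xt₁ ∧ xt ⊆ xt₁ ∧ l '' xt₁ = insert e (l '' xt) := by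
  have sq1l : ∀ p, Pi1 (l p) = lS (Pit1 p) := fun p => congrFun hl1 p
  have sq2l : ∀ p, Pi2 (l p) = lT (Pit2 p) := fun p => congrFun hl2 p
  have hστ : ∀ p, σ (Pi1 p) = τ (Pi2 p) := fun p => congrFun hP.2.2.1 p
  have hsqA : ∀ p, sigt (Pit1 p) = taut (Pit2 p) := fun p => congrFun hPt.2.2.1 p
  have huu : Config St (Pit1 '' xt) := hPt.1.1 _ hxt
  have hvv : Config Tt (Pit2 '' xt) := hPt.2.1.1 _ hxt
  have him1 : lS '' (Pit1 '' xt) = Pi1 '' (l '' xt) := by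
    rw [Set.image_image, Set.image_image]
    exact Set.image_congr fun p _ => (sq1l p).symm
  have him2 : lT '' (Pit2 '' xt) = Pi2 '' (l '' xt) := by
    rw [Set.image_image, Set.image_image]
    exact Set.image_congr fun p _ => (sq2l p).symm
  have himA : taut '' (Pit2 '' xt) = sigt '' (Pit1 '' xt) := by
    rw [Set.image_image, Set.image_image]
    exact Set.image_congr fun p _ => (hsqA p).symm
  have hy₀ : Config P (l '' xt) := hl.1 _ hxt
  have hS0 : Config S.toES (Pi1 '' (l '' xt)) := hP.1.1 _ hy₀
  have hT0 : Config T.toES (Pi2 '' (l '' xt)) := hP.2.1.1 _ hy₀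
  have hS1 : Config S.toES (Pi1 '' (insert e (l '' xt))) := hP.1.1 _ hy₁
  have hT1 : Config T.toES (Pi2 '' (insert e (l '' xt))) := hP.2.1.1 _ hy₁
  have hPi1ins : Pi1 '' (insert e (l '' xt)) = insert (Pi1 e) (Pi1 '' (l '' xt)) :=
    Set.image_insert_eq
  have hPi2ins : Pi2 '' (insert e (l '' xt)) = insert (Pi2 e) (Pi2 '' (l '' xt)) :=
    Set.image_insert_eq
  have hsnot : Pi1 e ∉ Pi1 '' (l '' xt) := by
    rintro ⟨e', he', hee⟩
    have : e' = e := hP.1.2 _ hy₁ e' (Set.mem_insert_of_mem _ he') e (Set.mem_insert _ _) hee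
    exact hen (this ▸ he')
  have htnot : Pi2 e ∉ Pi2 '' (l '' xt) := by
    rintro ⟨e', he', hee⟩
    have : e' = e := hP.2.1.2 _ hy₁ e' (Set.mem_insert_of_mem _ he') e (Set.mem_insert _ _) hee
    exact hen (this ▸ he')
  have hanotσ : σ (Pi1 e) ∉ σ '' (Pi1 '' (l '' xt)) := by
    rintro ⟨s', hs', he'⟩
    have hs'1 : s' ∈ Pi1 '' (insert e (l '' xt)) := by
      rw [hPi1ins]; exact Set.mem_insert_of_mem _ hs'
    have : s' = Pi1 e := hσm.2 _ hS1 s' hs'1 (Pi1 e)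
      (by rw [hPi1ins]; exact Set.mem_insert _ _) he'
    exact hsnot (this ▸ hs')
  have hτσ0 : τ '' (Pi2 '' (l '' xt)) = σ '' (Pi1 '' (l '' xt)) := by
    calc τ '' (Pi2 '' (l '' xt)) = (fun y => τ (Pi2 y)) '' (l '' xt) := Set.image_image _ _ _
      _ = (fun y => σ (Pi1 y)) '' (l '' xt) := Set.image_congr fun yy _ => (hστ yy).symm
      _ = σ '' (Pi1 '' (l '' xt)) := (Set.image_image _ _ _).symm
  have hanotτ : σ (Pi1 e) ∉ τ '' (Pi2 '' (l '' xt)) := by rw [hτσ0]; exact hanotσ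
  have hτa : τ (Pi2 e) = σ (Pi1 e) := (hστ e).symm
  have hinsσ : Config A.toES (insert (σ (Pi1 e)) (σ '' (Pi1 '' (l '' xt)))) := by
    have h0 : σ '' (Pi1 '' (insert e (l '' xt))) =
        insert (σ (Pi1 e)) (σ '' (Pi1 '' (l '' xt))) := by
      rw [hPi1ins, Set.image_insert_eq]
    have h1 := hσm.1 _ hS1
    rwa [h0] at h1
  have hinsτ : Config A.toES (insert (σ (Pi1 e)) (τ '' (Pi2 '' (l '' xt)))) := by
    rw [hτσ0]; exact hinsσ
  -- Find the matching pair of symmetric events over e.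
  obtain ⟨ss, tt, huu₁c, hvv₁c, hlSss, hlTtt, hcompat⟩ :
      ∃ ss tt, Config St (insert ss (Pit1 '' xt)) ∧ Config Tt (insert tt (Pit2 '' xt)) ∧
        lS ss = Pi1 e ∧ lT tt = Pi2 e ∧ sigt ss = taut tt := by
    cases hA : A.pol (σ (Pi1 e)) with
    | true =>
      have hsubS : lS '' (Pit1 '' xt) ⊆ Pi1 '' (insert e (l '' xt)) := by
        rw [him1, hPi1ins]; exact Set.subset_insert _ _
      obtain ⟨uu₁, huu₁, huusub, huuimg⟩ := hlSo.2 _ _ huu hS1 hsubS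
      have himg1' : lS '' uu₁ = insert (Pi1 e) (lS '' (Pit1 '' xt)) := by
        rw [huuimg, hPi1ins, him1]
      obtain ⟨ss, hssn, huu₁e, hlSss⟩ := cover_lift hlSo.1.1 huu₁ huusub rfl himg1'
        (by rw [him1]; exact hsnot)
      have huu₁c : Config St (insert ss (Pit1 '' xt)) := huu₁e ▸ huu₁
      have hθT := pairsOf_mem_famOf (Et := Tt) (l := lT) (r := rT) hvv
      have hpol1 : A.dual.pol (σ (Pi1 e)) = false := by
        show (!A.pol (σ (Pi1 e))) = false
        rw [hA]; rfl
      have hlAss : lA (sigt ss) = σ (Pi1 e) := by rw [hsq1, hlSss]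
      have hpol2 : A.dual.pol (rA (sigt ss)) = false := by
        show (!A.pol (rA (sigt ss))) = false
        rw [← hpolA, hlAss, hA]; rfl
      have hrmθT : relMap τ (pairsOf lT rT (Pit2 '' xt)) =
          pairsOf lA rA (sigt '' (Pit1 '' xt)) := by
        have h0 : relMap τ (pairsOf lT rT (Pit2 '' xt)) =
            pairsOf lA rA (taut '' (Pit2 '' xt)) :=
          relMap_pairs_square (fun b => (hsq3 b).symm) (fun b => (hsq4 b).symm)
        rw [h0, himA]
      have hlAimg : lA '' (sigt '' (Pit1 '' xt)) = σ '' (Pi1 '' (l '' xt)) := by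
        calc lA '' (sigt '' (Pit1 '' xt))
            = (fun b => lA (sigt b)) '' (Pit1 '' xt) := Set.image_image _ _ _
          _ = (fun b => σ (lS b)) '' (Pit1 '' xt) := Set.image_congr fun b _ => hsq1 b
          _ = σ '' (lS '' (Pit1 '' xt)) := (Set.image_image _ _ _).symm
          _ = σ '' (Pi1 '' (l '' xt)) := by rw [him1]
      have hnotrm : (σ (Pi1 e), rA (sigt ss)) ∉ relMap τ (pairsOf lT rT (Pit2 '' xt)) := by
        rw [hrmθT]
        rintro ⟨aa, haa, hee⟩
        have h1 : lA aa = σ (Pi1 e) := (congrArg Prod.fst hee).symm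
        have h2 : lA aa ∈ lA '' (sigt '' (Pit1 '' xt)) := ⟨aa, haa, rfl⟩
        rw [hlAimg, h1] at h2
        exact hanotσ h2
      have hinsrm : insert (σ (Pi1 e), rA (sigt ss))
          (relMap τ (pairsOf lT rT (Pit2 '' xt))) ∈ famOf At lA rA := by
        have hcfg : Config At (sigt '' (insert ss (Pit1 '' xt))) := hsigt.1 _ huu₁c
        have he1 : sigt '' (insert ss (Pit1 '' xt)) =
            insert (sigt ss) (sigt '' (Pit1 '' xt)) := Set.image_insert_eq
        have hmem := pairsOf_mem_famOf (l := lA) (r := rA) hcfg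
        rw [he1, pairsOf_insert, hlAss, ← hrmθT] at hmem
        exact hmem
      obtain ⟨⟨t₁, t₂⟩, ⟨hmemT, hτt₁, hτt₂⟩, _⟩ := hτr _ hθT _ _ hpol1 hpol2 hnotrm hinsrm
      have hnotinT : (t₁, t₂) ∉ pairsOf lT rT (Pit2 '' xt) := by
        intro h
        apply hnotrm
        exact ⟨(t₁, t₂), h, by simp [Prod.map, hτt₁, hτt₂]⟩
      obtain ⟨ww, hww, heqT⟩ := hmemT
      obtain ⟨tt, httn, hwwe, hlTtt₁, hrTtt₂⟩ := pairs_insert_realize hjmT hnotinT heqT.symm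
      obtain ⟨tstar, _, huniqT⟩ := recep_of_strong (PT := T) (B := A.dual) hlTo.1.1 hidT
        (fun z hz => hidA z hz) hτr (Pi2 '' (l '' xt)) (σ (Pi1 e)) hT0 hpol1 hanotτ hinsτ
      have ht₁ : t₁ = tstar := by
        apply huniqT
        refine ⟨fun h => hanotτ ⟨t₁, h, hτt₁⟩, ?_, hτt₁⟩
        have himgww : lT '' ww = insert t₁ (Pi2 '' (l '' xt)) := by
          rw [hwwe, Set.image_insert_eq, hlTtt₁, him2]
        have hc := hlTo.1.1.1 _ hww
        rwa [himgww] at hc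
      have ht : Pi2 e = tstar := by
        apply huniqT
        refine ⟨htnot, ?_, hτa⟩
        rw [← hPi2ins]
        exact hT1
      have ht₁t : t₁ = Pi2 e := by rw [ht₁, ← ht]
      have hvv₁c : Config Tt (insert tt (Pit2 '' xt)) := hwwe ▸ hww
      have hcompat : sigt ss = taut tt := by
        apply hjmA
        · rw [hlAss, hsq3, hlTtt₁, ht₁t]
          exact hστ e
        · rw [hsq4, hrTtt₂, hτt₂]
      exact ⟨ss, tt, huu₁c, hvv₁c, hlSss, by rw [hlTtt₁, ht₁t], hcompat⟩
    | false =>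
      have hsubT : lT '' (Pit2 '' xt) ⊆ Pi2 '' (insert e (l '' xt)) := by
        rw [him2, hPi2ins]; exact Set.subset_insert _ _
      obtain ⟨vv₁, hvv₁, hvvsub, hvvimg⟩ := hlTo.2 _ _ hvv hT1 hsubT
      have himg1' : lT '' vv₁ = insert (Pi2 e) (lT '' (Pit2 '' xt)) := by
        rw [hvvimg, hPi2ins, him2]
      obtain ⟨tt, httn, hvv₁e, hlTtt⟩ := cover_lift hlTo.1.1 hvv₁ hvvsub rfl himg1'
        (by rw [him2]; exact htnot)
      have hvv₁c : Config Tt (insert tt (Pit2 '' xt)) := hvv₁e ▸ hvv₁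
      have hθS := pairsOf_mem_famOf (Et := St) (l := lS) (r := rS) huu
      have hlAtt : lA (taut tt) = σ (Pi1 e) := by
        rw [hsq3, hlTtt]
        exact (hστ e).symm
      have hpol2 : A.pol (rA (taut tt)) = false := by
        rw [← hpolA, hlAtt]; exact hA
      have hrmθS : relMap σ (pairsOf lS rS (Pit1 '' xt)) =
          pairsOf lA rA (taut '' (Pit2 '' xt)) := by
        have h0 : relMap σ (pairsOf lS rS (Pit1 '' xt)) =
            pairsOf lA rA (sigt '' (Pit1 '' xt)) :=
          relMap_pairs_square (fun b => (hsq1 b).symm) (fun b => (hsq2 b).symm)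
        rw [h0, himA]
      have hlAimg : lA '' (taut '' (Pit2 '' xt)) = σ '' (Pi1 '' (l '' xt)) := by
        calc lA '' (taut '' (Pit2 '' xt))
            = (fun b => lA (taut b)) '' (Pit2 '' xt) := Set.image_image _ _ _
          _ = (fun b => τ (lT b)) '' (Pit2 '' xt) := Set.image_congr fun b _ => hsq3 b
          _ = τ '' (lT '' (Pit2 '' xt)) := (Set.image_image _ _ _).symm
          _ = τ '' (Pi2 '' (l '' xt)) := by rw [him2]
          _ = σ '' (Pi1 '' (l '' xt)) := hτσ0
      have hnotrm : (σ (Pi1 e), rA (taut tt)) ∉ relMap σ (pairsOf lS rS (Pit1 '' xt)) := by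
        rw [hrmθS]
        rintro ⟨aa, haa, hee⟩
        have h1 : lA aa = σ (Pi1 e) := (congrArg Prod.fst hee).symm
        have h2 : lA aa ∈ lA '' (taut '' (Pit2 '' xt)) := ⟨aa, haa, rfl⟩
        rw [hlAimg, h1] at h2
        exact hanotσ h2
      have hinsrm : insert (σ (Pi1 e), rA (taut tt))
          (relMap σ (pairsOf lS rS (Pit1 '' xt))) ∈ famOf At lA rA := by
        have hcfg : Config At (taut '' (insert tt (Pit2 '' xt))) := htaut.1 _ hvv₁c
        have he1 : taut '' (insert tt (Pit2 '' xt)) =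
            insert (taut tt) (taut '' (Pit2 '' xt)) := Set.image_insert_eq
        have hmem := pairsOf_mem_famOf (l := lA) (r := rA) hcfg
        rw [he1, pairsOf_insert, hlAtt, ← hrmθS] at hmem
        exact hmem
      obtain ⟨⟨s₁, s₂⟩, ⟨hmemS, hσs₁, hσs₂⟩, _⟩ := hσr _ hθS _ _ hA hpol2 hnotrm hinsrm
      have hnotinS : (s₁, s₂) ∉ pairsOf lS rS (Pit1 '' xt) := by
        intro h
        apply hnotrm
        exact ⟨(s₁, s₂), h, by simp [Prod.map, hσs₁, hσs₂]⟩
      obtain ⟨ww, hww, heqS⟩ := hmemS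
      obtain ⟨ss, hssn, hwwe, hlSss₁, hrSss₂⟩ := pairs_insert_realize hjmS hnotinS heqS.symm
      obtain ⟨sstar, _, huniqS⟩ := recep_of_strong (PT := S) (B := A) hlSo.1.1 hidS
        hidA hσr (Pi1 '' (l '' xt)) (σ (Pi1 e)) hS0 hA hanotσ hinsσ
      have hs₁ : s₁ = sstar := by
        apply huniqS
        refine ⟨fun h => hanotσ ⟨s₁, h, hσs₁⟩, ?_, hσs₁⟩
        have himgww : lS '' ww = insert s₁ (Pi1 '' (l '' xt)) := by
          rw [hwwe, Set.image_insert_eq, hlSss₁, him1]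
        have hc := hlSo.1.1.1 _ hww
        rwa [himgww] at hc
      have hs : Pi1 e = sstar := by
        apply huniqS
        refine ⟨hsnot, ?_, rfl⟩
        rw [← hPi1ins]
        exact hS1
      have hs₁s : s₁ = Pi1 e := by rw [hs₁, ← hs]
      have huu₁c : Config St (insert ss (Pit1 '' xt)) := hwwe ▸ hww
      have hcompat : sigt ss = taut tt := by
        apply hjmA
        · rw [hsq1, hlSss₁, hs₁s, hlAtt]
        · rw [hsq2, hrSss₂, hσs₂]
      exact ⟨ss, tt, huu₁c, hvv₁c, by rw [hlSss₁, hs₁s], hlTtt, hcompat⟩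
  -- Assemble the extended configuration of Pt via the universal property.
  have hy₁fin := config_finite hy₁
  have hval : IsMap (restES P _ hy₁fin) P Subtype.val := restES_val_map hy₁
  have hgS : IsMap (restES P _ hy₁fin) S.toES (Pi1 ∘ Subtype.val) := isMap_comp hval hP.1
  have hgT : IsMap (restES P _ hy₁fin) T.toES (Pi2 ∘ Subtype.val) := isMap_comp hval hP.2.1
  have hrangeS : ∀ w : ↥(insert e (l '' xt)),
      ∃ aa ∈ insert ss (Pit1 '' xt), lS aa = (Pi1 ∘ Subtype.val) w := by
    intro w
    rcases w.2 with hw | hw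
    · exact ⟨ss, Set.mem_insert _ _, by rw [hlSss]; exact congrArg Pi1 hw.symm⟩
    · obtain ⟨p, hp, hpe⟩ := hw
      exact ⟨Pit1 p, Set.mem_insert_of_mem _ ⟨p, hp, rfl⟩, by
        show lS (Pit1 p) = Pi1 w.1
        rw [← sq1l p, hpe]⟩
  have hrangeT : ∀ w : ↥(insert e (l '' xt)),
      ∃ aa ∈ insert tt (Pit2 '' xt), lT aa = (Pi2 ∘ Subtype.val) w := by
    intro w
    rcases w.2 with hw | hw
    · exact ⟨tt, Set.mem_insert _ _, by rw [hlTtt]; exact congrArg Pi2 hw.symm⟩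
    · obtain ⟨p, hp, hpe⟩ := hw
      exact ⟨Pit2 p, Set.mem_insert_of_mem _ ⟨p, hp, rfl⟩, by
        show lT (Pit2 p) = Pi2 w.1
        rw [← sq2l p, hpe]⟩
  obtain ⟨k₁, hk₁, hk₁mem, hk₁val⟩ := invmap_exists hlSo.1.1 hlSo.1.2 huu₁c hgS hrangeS
  obtain ⟨k₂, hk₂, hk₂mem, hk₂val⟩ := invmap_exists hlTo.1.1 hlTo.1.2 hvv₁c hgT hrangeT
  have hk₁det : ∀ w aa, aa ∈ insert ss (Pit1 '' xt) → lS aa = (Pi1 ∘ Subtype.val) w →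
      k₁ w = aa := fun w aa haa he' =>
    hlSo.1.1.2 _ huu₁c _ (hk₁mem w) aa haa (by rw [hk₁val w, he'])
  have hk₂det : ∀ w aa, aa ∈ insert tt (Pit2 '' xt) → lT aa = (Pi2 ∘ Subtype.val) w →
      k₂ w = aa := fun w aa haa he' =>
    hlTo.1.1.2 _ hvv₁c _ (hk₂mem w) aa haa (by rw [hk₂val w, he'])
  have hcomm : sigt ∘ k₁ = taut ∘ k₂ := by
    funext w
    show sigt (k₁ w) = taut (k₂ w)
    rcases w.2 with hw | hw
    · have h1 : k₁ w = ss := hk₁det w ss (Set.mem_insert _ _)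
        (by rw [hlSss]; exact congrArg Pi1 hw.symm)
      have h2 : k₂ w = tt := hk₂det w tt (Set.mem_insert _ _)
        (by rw [hlTtt]; exact congrArg Pi2 hw.symm)
      rw [h1, h2, hcompat]
    · obtain ⟨p, hp, hpe⟩ := hw
      have h1 : k₁ w = Pit1 p := hk₁det w (Pit1 p) (Set.mem_insert_of_mem _ ⟨p, hp, rfl⟩)
        (by show lS (Pit1 p) = Pi1 w.1; rw [← sq1l p, hpe])
      have h2 : k₂ w = Pit2 p := hk₂det w (Pit2 p) (Set.mem_insert_of_mem _ ⟨p, hp, rfl⟩)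
        (by show lT (Pit2 p) = Pi2 w.1; rw [← sq2l p, hpe])
      rw [h1, h2]
      exact hsqA p
  obtain ⟨m, ⟨hm, hm1, hm2⟩, _⟩ := hPt.2.2.2 (restES P _ hy₁fin) k₁ k₂ hk₁ hk₂ hcomm
  have hlm : l ∘ m = Subtype.val := by
    refine pb_unique hP _ (isMap_comp hm hl) hval ?_ ?_
    · funext w
      have a1 : Pi1 (l (m w)) = lS (Pit1 (m w)) := sq1l (m w)
      have a2 : Pit1 (m w) = k₁ w := congrFun hm1 w
      show Pi1 (l (m w)) = Pi1 w.1
      rw [a1, a2]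
      exact hk₁val w
    · funext w
      have a1 : Pi2 (l (m w)) = lT (Pit2 (m w)) := sq2l (m w)
      have a2 : Pit2 (m w) = k₂ w := congrFun hm2 w
      show Pi2 (l (m w)) = Pi2 w.1
      rw [a1, a2]
      exact hk₂val w
  refine ⟨m '' Set.univ, hm.1 _ (restES_univ_config hy₁), ?_, ?_⟩
  · -- xt is contained in the new configuration
    have hxtfin := config_finite hxt
    set j : ↥xt → ↥(insert e (l '' xt)) :=
      fun q => ⟨l q.1, Set.mem_insert_of_mem _ ⟨q.1, q.2, rfl⟩⟩ with hjdef
    have hj : IsMap (restES Pt _ hxtfin) (restES P _ hy₁fin) j := by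
      constructor
      · intro c hc
        rw [restES_config_iff hy₁]
        have hval_img : Subtype.val '' (j '' c) = l '' (Subtype.val '' c) := by
          ext b
          constructor
          · rintro ⟨_, ⟨q, hq, rfl⟩, rfl⟩
            exact ⟨q.1, ⟨q, hq, rfl⟩, rfl⟩
          · rintro ⟨_, ⟨q, hq, rfl⟩, rfl⟩
            exact ⟨j q, ⟨q, hq, rfl⟩, rfl⟩
        rw [hval_img]
        exact hl.1 _ ((restES_config_iff hxt c).mp hc)
      · intro c _ q hq q' hq' hee
        have h0 : l q.1 = l q'.1 := congrArg Subtype.val hee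
        exact Subtype.ext (hl.2 _ hxt q.1 q.2 q'.1 q'.2 h0)
    have hmj : m ∘ j = Subtype.val := by
      refine pb_unique hPt (restES Pt _ hxtfin) (isMap_comp hj hm) (restES_val_map hxt) ?_ ?_
      · funext q
        have a2 : Pit1 (m (j q)) = k₁ (j q) := congrFun hm1 (j q)
        have a3 : k₁ (j q) = Pit1 q.1 := hk₁det (j q) (Pit1 q.1)
          (Set.mem_insert_of_mem _ ⟨q.1, q.2, rfl⟩)
          (by show lS (Pit1 q.1) = Pi1 (l q.1); rw [← sq1l q.1])
        show Pit1 (m (j q)) = Pit1 q.1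
        rw [a2, a3]
      · funext q
        have a2 : Pit2 (m (j q)) = k₂ (j q) := congrFun hm2 (j q)
        have a3 : k₂ (j q) = Pit2 q.1 := hk₂det (j q) (Pit2 q.1)
          (Set.mem_insert_of_mem _ ⟨q.1, q.2, rfl⟩)
          (by show lT (Pit2 q.1) = Pi2 (l q.1); rw [← sq2l q.1])
        show Pit2 (m (j q)) = Pit2 q.1
        rw [a2, a3]
    intro p hp
    exact ⟨j ⟨p, hp⟩, trivial, congrFun hmj ⟨p, hp⟩⟩
  · calc l '' (m '' Set.univ) = (fun w => l (m w)) '' Set.univ := Set.image_image _ _ _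
      _ = (fun w : ↥(insert e (l '' xt)) => w.1) '' Set.univ :=
        Set.image_congr fun w _ => congrFun hlm w
      _ = insert e (l '' xt) := by rw [Set.image_univ, Subtype.range_coe]

end Stmt13Aux6
section Stmt13Aux7

variable {SE' TE' AE' StE' TtE' AtE' PE' PtE' : Type u}

lemma pb_open_lift
    {S : ESP SE'} {T : ESP TE'} {A : ESP AE'}
    {St : ES StE'} {Tt : ES TtE'} {At : ES AtE'}
    {P : ES PE'} {Pt : ES PtE'}
    {lS rS : StE' → SE'} {lT rT : TtE' → TE'} {lA rA : AtE' → AE'}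
    {σ : SE' → AE'} {τ : TE' → AE'} {sigt : StE' → AtE'} {taut : TtE' → AtE'}
    {Pi1 : PE' → SE'} {Pi2 : PE' → TE'} {Pit1 : PtE' → StE'} {Pit2 : PtE' → TtE'}
    {l : PtE' → PE'}
    (hlSo : OpenMap St S.toES lS) (hlTo : OpenMap Tt T.toES lT)
    (hjmS : ∀ a a', lS a = lS a' → rS a = rS a' → a = a')
    (hjmT : ∀ a a', lT a = lT a' → rT a = rT a' → a = a')
    (hjmA : ∀ a a', lA a = lA a' → rA a = rA a' → a = a')
    (hpolA : ∀ aa, A.pol (lA aa) = A.pol (rA aa))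
    (hidS : ∀ x, Config S.toES x → relId x ∈ famOf St lS rS)
    (hidT : ∀ x, Config T.toES x → relId x ∈ famOf Tt lT rT)
    (hidA : ∀ z, Config A.toES z → relId z ∈ famOf At lA rA)
    (hσm : IsMap S.toES A.toES σ) (hτm : IsMap T.toES A.toES τ)
    (hσr : StrongReceptive S (famOf St lS rS) A (famOf At lA rA) σ)
    (hτr : StrongReceptive T (famOf Tt lT rT) A.dual (famOf At lA rA) τ)
    (hsigt : IsMap St At sigt) (htaut : IsMap Tt At taut)
    (hsq1 : ∀ ss, lA (sigt ss) = σ (lS ss)) (hsq2 : ∀ ss, rA (sigt ss) = σ (rS ss))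
    (hsq3 : ∀ tt, lA (taut tt) = τ (lT tt)) (hsq4 : ∀ tt, rA (taut tt) = τ (rT tt))
    (hP : IsPullbackES P S.toES T.toES A.toES Pi1 Pi2 σ τ)
    (hPt : IsPullbackES Pt St Tt At Pit1 Pit2 sigt taut)
    (hl : IsMap Pt P l) (hl1 : Pi1 ∘ l = lS ∘ Pit1) (hl2 : Pi2 ∘ l = lT ∘ Pit2)
    :
    ∀ (xt : Set PtE') (y : Set PE'), Config Pt xt → Config P y → l '' xt ⊆ y →
      ∃ x', Config Pt x' ∧ xt ⊆ x' ∧ l '' x' = y := by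
  suffices main : ∀ n (xt : Set PtE') (y : Set PE'), Config Pt xt → Config P y →
      l '' xt ⊆ y → (y \ l '' xt).ncard = n →
      ∃ x', Config Pt x' ∧ xt ⊆ x' ∧ l '' x' = y by
    intro xt y h1 h2 h3
    exact main _ xt y h1 h2 h3 rfl
  intro n
  induction n with
  | zero =>
    intro xt y h1 h2 h3 hcard
    have hfin : (y \ l '' xt).Finite := (config_finite h2).diff
    have hd : y \ l '' xt = ∅ := (Set.ncard_eq_zero hfin).mp hcard
    exact ⟨xt, h1, subset_rfl, subset_antisymm h3 (Set.diff_eq_empty.mp hd)⟩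
  | succ n ih =>
    intro xt y h1 h2 h3 hcard
    have hyfin := config_finite h2
    have hfin : (y \ l '' xt).Finite := hyfin.diff
    have hne : (y \ l '' xt).Nonempty := Set.nonempty_of_ncard_ne_zero (by omega)
    obtain ⟨e, he, hemin⟩ := es_exists_min P hfin hne
    have hy₁ : Config P (insert e (l '' xt)) := by
      constructor
      · exact P.con_mono (Set.insert_subset he.1 h3) h2.1
      · intro b hb e'' hle
        rcases hb with rfl | hb
        · have he''y : e'' ∈ y := h2.2 he.1 hle
          by_cases h : e'' ∈ l '' xt
          · exact Set.mem_insert_of_mem _ h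
          · have : e'' = b := hemin e'' ⟨he''y, h⟩ hle
            exact this ▸ Set.mem_insert _ _
        · exact Set.mem_insert_of_mem _ ((hl.1 _ h1).2 hb hle)
    obtain ⟨x₁, hx₁, hsub₁, himg₁⟩ := pb_open_step hlSo hlTo hjmS hjmT hjmA hpolA hidS
      hidT hidA hσm hτm hσr hτr hsigt htaut hsq1 hsq2 hsq3 hsq4 hP hPt hl hl1 hl2
      h1 hy₁ he.2
    have hsub₃ : l '' x₁ ⊆ y := by rw [himg₁]; exact Set.insert_subset he.1 h3
    have hcard₁ : (y \ l '' x₁).ncard = n := by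
      rw [himg₁]
      have hde : y \ insert e (l '' xt) = (y \ l '' xt) \ {e} := by
        ext z
        simp only [Set.mem_diff, Set.mem_insert_iff, Set.mem_singleton_iff]
        tauto
      rw [hde, Set.ncard_diff_singleton_of_mem he]
      omega
    obtain ⟨x', hx', hsub', himg'⟩ := ih x₁ y hx₁ h2 hsub₃ hcard₁
    exact ⟨x', hx', subset_trans hsub₁ hsub', himg'⟩

end Stmt13Aux7
end Stmt13Aux2

end Stmt13Aux

/-- the pullback of two courteous strong-receptive pre-∼-strategies
exists in event structures with symmetry: the pullback of the symmetries is a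
symmetry on the pullback, the projections preserve symmetry, and the square is a
pullback in ess. -/
theorem statement13 {SE TE AE StE TtE AtE PE PtE : Type u}
    (S : ESP SE) (T : ESP TE) (A : ESP AE)
    (St : ESP StE) (lS rS : StE → SE) (hSsp : IsSymSpanESP S St lS rS)
    (Tt : ESP TtE) (lT rT : TtE → TE) (hTsp : IsSymSpanESP T Tt lT rT)
    (At : ESP AtE) (lA rA : AtE → AE) (hAsp : IsSymSpanESP A At lA rA)
    (σ : SE → AE) (τ : TE → AE)
    (hσmap : IsESPMap S A σ)
    (hσfam : FamPres (famOf St.toES lS rS) (famOf At.toES lA rA) σ)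
    (hσc : Courteous S A σ)
    (hσr : StrongReceptive S (famOf St.toES lS rS) A (famOf At.toES lA rA) σ)
    (hτmap : IsESPMap T A.dual τ)
    (hτfam : FamPres (famOf Tt.toES lT rT) (famOf At.toES lA rA) τ)
    (hτc : Courteous T A.dual τ)
    (hτr : StrongReceptive T (famOf Tt.toES lT rT) A.dual (famOf At.toES lA rA) τ)
    (sigt : StE → AtE) (hsigt : IsMap St.toES At.toES sigt)
    (hsigt1 : lA ∘ sigt = σ ∘ lS) (hsigt2 : rA ∘ sigt = σ ∘ rS)
    (taut : TtE → AtE) (htaut : IsMap Tt.toES At.toES taut)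
    (htaut1 : lA ∘ taut = τ ∘ lT) (htaut2 : rA ∘ taut = τ ∘ rT)
    (P : ES PE) (Pi1 : PE → SE) (Pi2 : PE → TE)
    (hP : IsPullbackES P S.toES T.toES A.toES Pi1 Pi2 σ τ)
    (Pt : ES PtE) (Pit1 : PtE → StE) (Pit2 : PtE → TtE)
    (hPt : IsPullbackES Pt St.toES Tt.toES At.toES Pit1 Pit2 sigt taut)
    (l r : PtE → PE)
    (hl : IsMap Pt P l) (hl1 : Pi1 ∘ l = lS ∘ Pit1) (hl2 : Pi2 ∘ l = lT ∘ Pit2)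
    (hr : IsMap Pt P r) (hr1 : Pi1 ∘ r = rS ∘ Pit1) (hr2 : Pi2 ∘ r = rT ∘ Pit2) :
    IsSymSpanES P Pt l r ∧
    FamPres (famOf Pt l r) (famOf St.toES lS rS) Pi1 ∧
    FamPres (famOf Pt l r) (famOf Tt.toES lT rT) Pi2 ∧
    (∀ {X : Type u} (EX : ES X) (SX : Set (Rel2 X)), IsIsoFamily EX SX →
      ∀ (x : X → SE) (y : X → TE),
        IsMap EX S.toES x → FamPres SX (famOf St.toES lS rS) x →
        IsMap EX T.toES y → FamPres SX (famOf Tt.toES lT rT) y →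
        σ ∘ x = τ ∘ y →
        ∃! h : X → PE, IsMap EX P h ∧ FamPres SX (famOf Pt l r) h ∧
          Pi1 ∘ h = x ∧ Pi2 ∘ h = y) := by
  -- Abbreviations for the span data
  have hlSo := hSsp.1.1
  have hrSo := hSsp.1.2.1
  have hjmS := hSsp.1.2.2.1
  have hidS := hSsp.1.2.2.2.1
  have hinvS := hSsp.1.2.2.2.2.1
  have hcompS := hSsp.1.2.2.2.2.2
  have hlTo := hTsp.1.1
  have hrTo := hTsp.1.2.1
  have hjmT := hTsp.1.2.2.1
  have hidT := hTsp.1.2.2.2.1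
  have hinvT := hTsp.1.2.2.2.2.1
  have hcompT := hTsp.1.2.2.2.2.2
  have hjmA := hAsp.1.2.2.1
  have hidA := hAsp.1.2.2.2.1
  have hinvA := hAsp.1.2.2.2.2.1
  have hlSm : IsMap St.toES S.toES lS := hlSo.1.1
  have hlSrig := hlSo.1.2
  have hrSm : IsMap St.toES S.toES rS := hrSo.1.1
  have hrSrig := hrSo.1.2
  have hlTm : IsMap Tt.toES T.toES lT := hlTo.1.1
  have hlTrig := hlTo.1.2
  have hrTm : IsMap Tt.toES T.toES rT := hrTo.1.1
  have hrTrig := hrTo.1.2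
  have hpolA : ∀ at', A.pol (lA at') = A.pol (rA at') :=
    fun at' => (hAsp.2.1.2 at').trans (hAsp.2.2.2 at').symm
  have hswapS : famOf St.toES rS lS = famOf St.toES lS rS := famOf_swap hinvS
  have hswapT : famOf Tt.toES rT lT = famOf Tt.toES lT rT := famOf_swap hinvT
  have hswapA : famOf At.toES rA lA = famOf At.toES lA rA := famOf_swap hinvA
  have hσm : IsMap S.toES A.toES σ := hσmap.1
  have hτm : IsMap T.toES A.toES τ := hτmap.1
  have hsq1 : ∀ st', lA (sigt st') = σ (lS st') := fun st' => congrFun hsigt1 st'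
  have hsq2 : ∀ st', rA (sigt st') = σ (rS st') := fun st' => congrFun hsigt2 st'
  have hsq3 : ∀ tt', lA (taut tt') = τ (lT tt') := fun tt' => congrFun htaut1 tt'
  have hsq4 : ∀ tt', rA (taut tt') = τ (rT tt') := fun tt' => congrFun htaut2 tt'
  have sq1l : ∀ p, Pi1 (l p) = lS (Pit1 p) := fun p => congrFun hl1 p
  have sq2l : ∀ p, Pi2 (l p) = lT (Pit2 p) := fun p => congrFun hl2 p
  have sq1r : ∀ p, Pi1 (r p) = rS (Pit1 p) := fun p => congrFun hr1 p
  have sq2r : ∀ p, Pi2 (r p) = rT (Pit2 p) := fun p => congrFun hr2 p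
  have hστp : ∀ p, σ (Pi1 p) = τ (Pi2 p) := fun p => congrFun hP.2.2.1 p
  have hsqAp : ∀ p, sigt (Pit1 p) = taut (Pit2 p) := fun p => congrFun hPt.2.2.1 p
  -- Rigidity of l and r
  have rig_l : ∀ a b, Pt.le a b → P.le (l a) (l b) :=
    pb_rigid hPt hP.1 hP.2.1 hl hl1 hl2 hlSrig hlTrig
  have rig_r : ∀ a b, Pt.le a b → P.le (r a) (r b) :=
    pb_rigid hPt hP.1 hP.2.1 hr hr1 hr2 hrSrig hrTrig
  -- Openness of l
  have lift_l := pb_open_lift hlSo hlTo hjmS hjmT hjmA hpolA hidS hidT hidA hσm hτm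
    hσr hτr hsigt htaut hsq1 hsq2 hsq3 hsq4 hP hPt hl hl1 hl2
  have open_l : OpenMap Pt P l := ⟨⟨hl, rig_l⟩, lift_l⟩
  -- Openness of r (by swapping the two legs of every span)
  have hjmS' : ∀ a a', rS a = rS a' → lS a = lS a' → a = a' :=
    fun a a' h1 h2 => hjmS a a' h2 h1
  have hjmT' : ∀ a a', rT a = rT a' → lT a = lT a' → a = a' :=
    fun a a' h1 h2 => hjmT a a' h2 h1
  have hjmA' : ∀ a a', rA a = rA a' → lA a = lA a' → a = a' :=
    fun a a' h1 h2 => hjmA a a' h2 h1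
  have hpolA' : ∀ at', A.pol (rA at') = A.pol (lA at') := fun at' => (hpolA at').symm
  have hidS' : ∀ x, Config S.toES x → relId x ∈ famOf St.toES rS lS := by
    intro x hx
    rw [hswapS]
    exact hidS x hx
  have hidT' : ∀ x, Config T.toES x → relId x ∈ famOf Tt.toES rT lT := by
    intro x hx
    rw [hswapT]
    exact hidT x hx
  have hidA' : ∀ z, Config A.toES z → relId z ∈ famOf At.toES rA lA := by
    intro z hz
    rw [hswapA]
    exact hidA z hz
  have hσr' : StrongReceptive S (famOf St.toES rS lS) A (famOf At.toES rA lA) σ := by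
    rw [hswapS, hswapA]
    exact hσr
  have hτr' : StrongReceptive T (famOf Tt.toES rT lT) A.dual (famOf At.toES rA lA) τ := by
    rw [hswapT, hswapA]
    exact hτr
  have lift_r := pb_open_lift hrSo hrTo hjmS' hjmT' hjmA' hpolA' hidS' hidT' hidA'
    hσm hτm hσr' hτr' hsigt htaut (fun st' => congrFun hsigt2 st')
    (fun st' => congrFun hsigt1 st') (fun tt' => congrFun htaut2 tt')
    (fun tt' => congrFun htaut1 tt') hP hPt hr hr1 hr2
  have open_r : OpenMap Pt P r := ⟨⟨hr, rig_r⟩, lift_r⟩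
  -- Joint monicity
  have jm : ∀ p q, l p = l q → r p = r q → p = q :=
    pb_jointly_monic hP hPt hl hl1 hl2 hr hr1 hr2 rig_l rig_r hlSm hlTm hjmS hjmT
  -- relId closure
  have hrelId : ∀ x, Config P x → relId x ∈ famOf Pt l r := by
    intro x hx
    have hxfin := config_finite hx
    have hvalx : IsMap (restES P x hxfin) P Subtype.val := restES_val_map hx
    have hS0 : Config S.toES (Pi1 '' x) := hP.1.1 _ hx
    have hT0 : Config T.toES (Pi2 '' x) := hP.2.1.1 _ hx
    obtain ⟨u, hu, heu⟩ := hidS _ hS0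
    obtain ⟨v, hv, hev⟩ := hidT _ hT0
    have heu' : relId (Pi1 '' x) = pairsOf lS rS u := heu
    have hev' : relId (Pi2 '' x) = pairsOf lT rT v := hev
    have hueq : ∀ a ∈ u, lS a = rS a := by
      intro a ha
      have hm : (lS a, rS a) ∈ relId (Pi1 '' x) := by rw [heu']; exact mem_pairsOf ha
      obtain ⟨c, _, hcc⟩ := hm
      have h1 : c = lS a := congrArg Prod.fst hcc
      have h2 : c = rS a := congrArg Prod.snd hcc
      rw [← h1, ← h2]
    have hveq : ∀ a ∈ v, lT a = rT a := by
      intro a ha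
      have hm : (lT a, rT a) ∈ relId (Pi2 '' x) := by rw [hev']; exact mem_pairsOf ha
      obtain ⟨c, _, hcc⟩ := hm
      have h1 : c = lT a := congrArg Prod.fst hcc
      have h2 : c = rT a := congrArg Prod.snd hcc
      rw [← h1, ← h2]
    have hrangeS : ∀ w : ↥x, ∃ a ∈ u, lS a = (Pi1 ∘ Subtype.val) w := by
      intro w
      have hm : (Pi1 w.1, Pi1 w.1) ∈ relId (Pi1 '' x) := ⟨Pi1 w.1, ⟨w.1, w.2, rfl⟩, rfl⟩
      rw [heu'] at hm
      obtain ⟨a, ha, he⟩ := hm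
      exact ⟨a, ha, (congrArg Prod.fst he).symm⟩
    have hrangeT : ∀ w : ↥x, ∃ a ∈ v, lT a = (Pi2 ∘ Subtype.val) w := by
      intro w
      have hm : (Pi2 w.1, Pi2 w.1) ∈ relId (Pi2 '' x) := ⟨Pi2 w.1, ⟨w.1, w.2, rfl⟩, rfl⟩
      rw [hev'] at hm
      obtain ⟨a, ha, he⟩ := hm
      exact ⟨a, ha, (congrArg Prod.fst he).symm⟩
    obtain ⟨k₁, hk₁, hk₁mem, hk₁val⟩ :=
      invmap_exists hlSm hlSrig hu (isMap_comp hvalx hP.1) hrangeS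
    obtain ⟨k₂, hk₂, hk₂mem, hk₂val⟩ :=
      invmap_exists hlTm hlTrig hv (isMap_comp hvalx hP.2.1) hrangeT
    have hcomm : sigt ∘ k₁ = taut ∘ k₂ := by
      funext w
      show sigt (k₁ w) = taut (k₂ w)
      apply hjmA
      · rw [hsq1, hsq3, hk₁val w, hk₂val w]
        exact hστp w.1
      · rw [hsq2, hsq4, ← hueq _ (hk₁mem w), ← hveq _ (hk₂mem w), hk₁val w, hk₂val w]
        exact hστp w.1
    obtain ⟨m, hm, _, _, hlm, hrm⟩ := mkMember hP hPt hl hl1 hl2 hr hr1 hr2 _ k₁ k₂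
      hk₁ hk₂ hcomm hvalx hvalx (fun w => hk₁val w)
      (fun w => by rw [← hueq _ (hk₁mem w)]; exact hk₁val w)
      (fun w => hk₂val w)
      (fun w => by rw [← hveq _ (hk₂mem w)]; exact hk₂val w)
    refine ⟨m '' Set.univ, hm.1 _ (restES_univ_config hx), ?_⟩
    ext p
    constructor
    · rintro ⟨c, hc, rfl⟩
      refine ⟨m ⟨c, hc⟩, ⟨⟨c, hc⟩, trivial, rfl⟩, ?_⟩
      have h1 : l (m ⟨c, hc⟩) = c := congrFun hlm ⟨c, hc⟩
      have h2 : r (m ⟨c, hc⟩) = c := congrFun hrm ⟨c, hc⟩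
      rw [h1, h2]
    · rintro ⟨_, ⟨w, _, rfl⟩, rfl⟩
      have h1 : l (m w) = w.1 := congrFun hlm w
      have h2 : r (m w) = w.1 := congrFun hrm w
      rw [h1, h2]
      exact ⟨w.1, w.2, rfl⟩
  -- relInv closure
  have hrelInv : ∀ θ ∈ famOf Pt l r, relInv θ ∈ famOf Pt l r := by
    rintro θ ⟨z, hz, rfl⟩
    show relInv (pairsOf l r z) ∈ famOf Pt l r
    have hzfin := config_finite hz
    have hvalz : IsMap (restES Pt z hzfin) Pt Subtype.val := restES_val_map hz
    have hu0 : Config St.toES (Pit1 '' z) := hPt.1.1 _ hz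
    have hv0 : Config Tt.toES (Pit2 '' z) := hPt.2.1.1 _ hz
    obtain ⟨u, hu, heu⟩ := hinvS _ (pairsOf_mem_famOf (l := lS) (r := rS) hu0)
    obtain ⟨v, hv, hev⟩ := hinvT _ (pairsOf_mem_famOf (l := lT) (r := rT) hv0)
    have heu' : pairsOf rS lS (Pit1 '' z) = pairsOf lS rS u := by
      rw [← relInv_pairsOf]; exact heu
    have hev' : pairsOf rT lT (Pit2 '' z) = pairsOf lT rT v := by
      rw [← relInv_pairsOf]; exact hev
    have hrangeS : ∀ w : ↥z, ∃ a ∈ u, lS a = (Pi1 ∘ r ∘ Subtype.val) w := by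
      intro w
      have hm : (rS (Pit1 w.1), lS (Pit1 w.1)) ∈ pairsOf rS lS (Pit1 '' z) :=
        mem_pairsOf ⟨w.1, w.2, rfl⟩
      rw [heu'] at hm
      obtain ⟨a, ha, he⟩ := hm
      refine ⟨a, ha, ?_⟩
      have h1 : rS (Pit1 w.1) = lS a := congrArg Prod.fst he
      show lS a = Pi1 (r w.1)
      rw [← h1, sq1r]
    have hrangeT : ∀ w : ↥z, ∃ a ∈ v, lT a = (Pi2 ∘ r ∘ Subtype.val) w := by
      intro w
      have hm : (rT (Pit2 w.1), lT (Pit2 w.1)) ∈ pairsOf rT lT (Pit2 '' z) :=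
        mem_pairsOf ⟨w.1, w.2, rfl⟩
      rw [hev'] at hm
      obtain ⟨a, ha, he⟩ := hm
      refine ⟨a, ha, ?_⟩
      have h1 : rT (Pit2 w.1) = lT a := congrArg Prod.fst he
      show lT a = Pi2 (r w.1)
      rw [← h1, sq2r]
    obtain ⟨k₁, hk₁, hk₁mem, hk₁val⟩ := invmap_exists hlSm hlSrig hu
      (isMap_comp (isMap_comp hvalz hr) hP.1) hrangeS
    obtain ⟨k₂, hk₂, hk₂mem, hk₂val⟩ := invmap_exists hlTm hlTrig hv
      (isMap_comp (isMap_comp hvalz hr) hP.2.1) hrangeT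
    have hk₁r : ∀ w, rS (k₁ w) = Pi1 (l w.1) := by
      intro w
      have hm : (lS (k₁ w), rS (k₁ w)) ∈ pairsOf rS lS (Pit1 '' z) := by
        rw [heu']; exact mem_pairsOf (hk₁mem w)
      obtain ⟨b, hb, he⟩ := hm
      have h1 : lS (k₁ w) = rS b := congrArg Prod.fst he
      have h2 : rS (k₁ w) = lS b := congrArg Prod.snd he
      have h3 : rS b = rS (Pit1 w.1) := by
        rw [← h1, hk₁val w]
        exact sq1r w.1
      have hbw : b = Pit1 w.1 := hrSm.2 _ hu0 b hb (Pit1 w.1) ⟨w.1, w.2, rfl⟩ h3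
      rw [h2, hbw]
      exact (sq1l w.1).symm
    have hk₂r : ∀ w, rT (k₂ w) = Pi2 (l w.1) := by
      intro w
      have hm : (lT (k₂ w), rT (k₂ w)) ∈ pairsOf rT lT (Pit2 '' z) := by
        rw [hev']; exact mem_pairsOf (hk₂mem w)
      obtain ⟨b, hb, he⟩ := hm
      have h1 : lT (k₂ w) = rT b := congrArg Prod.fst he
      have h2 : rT (k₂ w) = lT b := congrArg Prod.snd he
      have h3 : rT b = rT (Pit2 w.1) := by
        rw [← h1, hk₂val w]
        exact sq2r w.1
      have hbw : b = Pit2 w.1 := hrTm.2 _ hv0 b hb (Pit2 w.1) ⟨w.1, w.2, rfl⟩ h3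
      rw [h2, hbw]
      exact (sq2l w.1).symm
    have hcomm : sigt ∘ k₁ = taut ∘ k₂ := by
      funext w
      show sigt (k₁ w) = taut (k₂ w)
      apply hjmA
      · rw [hsq1, hsq3, hk₁val w, hk₂val w]
        exact hστp (r w.1)
      · rw [hsq2, hsq4, hk₁r w, hk₂r w]
        exact hστp (l w.1)
    obtain ⟨m, hm, _, _, hlm, hrm⟩ := mkMember hP hPt hl hl1 hl2 hr hr1 hr2 _ k₁ k₂
      hk₁ hk₂ hcomm (isMap_comp hvalz hr) (isMap_comp hvalz hl)
      (fun w => hk₁val w) (fun w => hk₁r w) (fun w => hk₂val w) (fun w => hk₂r w)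
    refine ⟨m '' Set.univ, hm.1 _ (restES_univ_config hz), ?_⟩
    ext p
    constructor
    · rintro ⟨q, ⟨c, hc, rfl⟩, rfl⟩
      refine ⟨m ⟨c, hc⟩, ⟨⟨c, hc⟩, trivial, rfl⟩, ?_⟩
      have h1 : l (m ⟨c, hc⟩) = r c := congrFun hlm ⟨c, hc⟩
      have h2 : r (m ⟨c, hc⟩) = l c := congrFun hrm ⟨c, hc⟩
      rw [h1, h2]
      rfl
    · rintro ⟨_, ⟨w, _, rfl⟩, rfl⟩
      refine ⟨(l w.1, r w.1), mem_pairsOf w.2, ?_⟩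
      have h1 : l (m w) = r w.1 := congrFun hlm w
      have h2 : r (m w) = l w.1 := congrFun hrm w
      rw [h1, h2]
      rfl
  -- relComp closure
  have hrelComp : ∀ θ ∈ famOf Pt l r, ∀ θ' ∈ famOf Pt l r, rran θ = rdom θ' →
      relComp θ θ' ∈ famOf Pt l r := by
    rintro θ ⟨z, hz, rfl⟩ θ' ⟨z', hz', rfl⟩ hran
    show relComp (pairsOf l r z) (pairsOf l r z') ∈ famOf Pt l r
    have hranz : r '' z = l '' z' := by
      have h0 : rran (pairsOf l r z) = rdom (pairsOf l r z') := hran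
      rwa [rran_pairsOf, rdom_pairsOf] at h0
    have hzfin := config_finite hz
    have hvalz : IsMap (restES Pt z hzfin) Pt Subtype.val := restES_val_map hz
    have hrangeP : ∀ w : ↥z, ∃ a ∈ z', l a = (r ∘ Subtype.val) w := by
      intro w
      have hm : r w.1 ∈ l '' z' := by rw [← hranz]; exact ⟨w.1, w.2, rfl⟩
      obtain ⟨a, ha, he⟩ := hm
      exact ⟨a, ha, he⟩
    obtain ⟨pf, hpf, hpfmem, hpfval⟩ :=
      invmap_exists hl rig_l hz' (isMap_comp hvalz hr) hrangeP
    have hu0 : Config St.toES (Pit1 '' z) := hPt.1.1 _ hz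
    have hu0' : Config St.toES (Pit1 '' z') := hPt.1.1 _ hz'
    have hv0 : Config Tt.toES (Pit2 '' z) := hPt.2.1.1 _ hz
    have hv0' : Config Tt.toES (Pit2 '' z') := hPt.2.1.1 _ hz'
    have hranS : rran (pairsOf lS rS (Pit1 '' z)) = rdom (pairsOf lS rS (Pit1 '' z')) := by
      rw [rran_pairsOf, rdom_pairsOf]
      calc rS '' (Pit1 '' z) = (fun p => rS (Pit1 p)) '' z := Set.image_image _ _ _
        _ = (fun p => Pi1 (r p)) '' z := Set.image_congr fun p _ => (sq1r p).symm
        _ = Pi1 '' (r '' z) := (Set.image_image _ _ _).symm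
        _ = Pi1 '' (l '' z') := by rw [hranz]
        _ = (fun p => Pi1 (l p)) '' z' := Set.image_image _ _ _
        _ = (fun p => lS (Pit1 p)) '' z' := Set.image_congr fun p _ => sq1l p
        _ = lS '' (Pit1 '' z') := (Set.image_image _ _ _).symm
    have hranT : rran (pairsOf lT rT (Pit2 '' z)) = rdom (pairsOf lT rT (Pit2 '' z')) := by
      rw [rran_pairsOf, rdom_pairsOf]
      calc rT '' (Pit2 '' z) = (fun p => rT (Pit2 p)) '' z := Set.image_image _ _ _
        _ = (fun p => Pi2 (r p)) '' z := Set.image_congr fun p _ => (sq2r p).symm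
        _ = Pi2 '' (r '' z) := (Set.image_image _ _ _).symm
        _ = Pi2 '' (l '' z') := by rw [hranz]
        _ = (fun p => Pi2 (l p)) '' z' := Set.image_image _ _ _
        _ = (fun p => lT (Pit2 p)) '' z' := Set.image_congr fun p _ => sq2l p
        _ = lT '' (Pit2 '' z') := (Set.image_image _ _ _).symm
    obtain ⟨u, hu, heu⟩ := hcompS _ (pairsOf_mem_famOf hu0) _ (pairsOf_mem_famOf hu0') hranS
    obtain ⟨v, hv, hev⟩ := hcompT _ (pairsOf_mem_famOf hv0) _ (pairsOf_mem_famOf hv0') hranT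
    have heu' : relComp (pairsOf lS rS (Pit1 '' z)) (pairsOf lS rS (Pit1 '' z')) =
        pairsOf lS rS u := heu
    have hev' : relComp (pairsOf lT rT (Pit2 '' z)) (pairsOf lT rT (Pit2 '' z')) =
        pairsOf lT rT v := hev
    have hcompMemS : ∀ w : ↥z, (Pi1 (l w.1), Pi1 (r (pf w))) ∈
        relComp (pairsOf lS rS (Pit1 '' z)) (pairsOf lS rS (Pit1 '' z')) := by
      intro w
      refine ⟨Pi1 (r w.1), ?_, ?_⟩
      · refine ⟨Pit1 w.1, ⟨w.1, w.2, rfl⟩, ?_⟩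
        rw [sq1l w.1, sq1r w.1]
      · refine ⟨Pit1 (pf w), ⟨pf w, hpfmem w, rfl⟩, ?_⟩
        have h0 : Pi1 (r w.1) = Pi1 (l (pf w)) := (congrArg Pi1 (hpfval w)).symm
        rw [h0, sq1l (pf w), sq1r (pf w)]
    have hcompMemT : ∀ w : ↥z, (Pi2 (l w.1), Pi2 (r (pf w))) ∈
        relComp (pairsOf lT rT (Pit2 '' z)) (pairsOf lT rT (Pit2 '' z')) := by
      intro w
      refine ⟨Pi2 (r w.1), ?_, ?_⟩
      · refine ⟨Pit2 w.1, ⟨w.1, w.2, rfl⟩, ?_⟩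
        rw [sq2l w.1, sq2r w.1]
      · refine ⟨Pit2 (pf w), ⟨pf w, hpfmem w, rfl⟩, ?_⟩
        have h0 : Pi2 (r w.1) = Pi2 (l (pf w)) := (congrArg Pi2 (hpfval w)).symm
        rw [h0, sq2l (pf w), sq2r (pf w)]
    have hrangeS : ∀ w : ↥z, ∃ a ∈ u, lS a = (Pi1 ∘ l ∘ Subtype.val) w := by
      intro w
      have hm := hcompMemS w
      rw [heu'] at hm
      obtain ⟨a, ha, he⟩ := hm
      exact ⟨a, ha, (congrArg Prod.fst he).symm⟩
    have hrangeT : ∀ w : ↥z, ∃ a ∈ v, lT a = (Pi2 ∘ l ∘ Subtype.val) w := by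
      intro w
      have hm := hcompMemT w
      rw [hev'] at hm
      obtain ⟨a, ha, he⟩ := hm
      exact ⟨a, ha, (congrArg Prod.fst he).symm⟩
    obtain ⟨k₁, hk₁, hk₁mem, hk₁val⟩ := invmap_exists hlSm hlSrig hu
      (isMap_comp (isMap_comp hvalz hl) hP.1) hrangeS
    obtain ⟨k₂, hk₂, hk₂mem, hk₂val⟩ := invmap_exists hlTm hlTrig hv
      (isMap_comp (isMap_comp hvalz hl) hP.2.1) hrangeT
    have hk₁r : ∀ w, rS (k₁ w) = Pi1 (r (pf w)) := by
      intro w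
      have hm : (lS (k₁ w), rS (k₁ w)) ∈
          relComp (pairsOf lS rS (Pit1 '' z)) (pairsOf lS rS (Pit1 '' z')) := by
        rw [heu']; exact mem_pairsOf (hk₁mem w)
      obtain ⟨b, h1, h2⟩ := hm
      obtain ⟨c, hc, hce⟩ := h1
      have hc1 : lS (k₁ w) = lS c := congrArg Prod.fst hce
      have hc2 : b = rS c := congrArg Prod.snd hce
      have hcw : c = Pit1 w.1 := by
        apply hlSm.2 _ hu0 c hc (Pit1 w.1) ⟨w.1, w.2, rfl⟩
        rw [← hc1, hk₁val w]
        exact sq1l w.1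
      obtain ⟨c', hc', hce'⟩ := h2
      have hc1' : b = lS c' := congrArg Prod.fst hce'
      have hc2' : rS (k₁ w) = rS c' := congrArg Prod.snd hce'
      have hcw' : c' = Pit1 (pf w) := by
        apply hlSm.2 _ hu0' c' hc' (Pit1 (pf w)) ⟨pf w, hpfmem w, rfl⟩
        rw [← hc1', hc2, hcw, ← sq1r w.1, ← sq1l (pf w)]
        exact (congrArg Pi1 (hpfval w)).symm
      rw [hc2', hcw']
      exact (sq1r (pf w)).symm
    have hk₂r : ∀ w, rT (k₂ w) = Pi2 (r (pf w)) := by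
      intro w
      have hm : (lT (k₂ w), rT (k₂ w)) ∈
          relComp (pairsOf lT rT (Pit2 '' z)) (pairsOf lT rT (Pit2 '' z')) := by
        rw [hev']; exact mem_pairsOf (hk₂mem w)
      obtain ⟨b, h1, h2⟩ := hm
      obtain ⟨c, hc, hce⟩ := h1
      have hc1 : lT (k₂ w) = lT c := congrArg Prod.fst hce
      have hc2 : b = rT c := congrArg Prod.snd hce
      have hcw : c = Pit2 w.1 := by
        apply hlTm.2 _ hv0 c hc (Pit2 w.1) ⟨w.1, w.2, rfl⟩
        rw [← hc1, hk₂val w]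
        exact sq2l w.1
      obtain ⟨c', hc', hce'⟩ := h2
      have hc1' : b = lT c' := congrArg Prod.fst hce'
      have hc2' : rT (k₂ w) = rT c' := congrArg Prod.snd hce'
      have hcw' : c' = Pit2 (pf w) := by
        apply hlTm.2 _ hv0' c' hc' (Pit2 (pf w)) ⟨pf w, hpfmem w, rfl⟩
        rw [← hc1', hc2, hcw, ← sq2r w.1, ← sq2l (pf w)]
        exact (congrArg Pi2 (hpfval w)).symm
      rw [hc2', hcw']
      exact (sq2r (pf w)).symm
    have hcomm : sigt ∘ k₁ = taut ∘ k₂ := by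
      funext w
      show sigt (k₁ w) = taut (k₂ w)
      apply hjmA
      · rw [hsq1, hsq3, hk₁val w, hk₂val w]
        exact hστp (l w.1)
      · rw [hsq2, hsq4, hk₁r w, hk₂r w]
        exact hστp (r (pf w))
    obtain ⟨m, hm, _, _, hlm, hrm⟩ := mkMember hP hPt hl hl1 hl2 hr hr1 hr2 _ k₁ k₂
      hk₁ hk₂ hcomm (isMap_comp hvalz hl) (isMap_comp hpf hr)
      (fun w => hk₁val w) (fun w => hk₁r w) (fun w => hk₂val w) (fun w => hk₂r w)
    refine ⟨m '' Set.univ, hm.1 _ (restES_univ_config hz), ?_⟩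
    ext ⟨p1, p2⟩
    constructor
    · rintro ⟨b, h1, h2⟩
      obtain ⟨q, hq, he1⟩ := h1
      obtain ⟨q', hq', he2⟩ := h2
      have ha1 : p1 = l q := congrArg Prod.fst he1
      have ha2 : b = r q := congrArg Prod.snd he1
      have ha3 : b = l q' := congrArg Prod.fst he2
      have ha4 : p2 = r q' := congrArg Prod.snd he2
      have hq'pf : q' = pf ⟨q, hq⟩ := by
        apply hl.2 _ hz' q' hq' (pf ⟨q, hq⟩) (hpfmem _)
        have h5 : l (pf ⟨q, hq⟩) = r q := hpfval ⟨q, hq⟩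
        rw [h5, ← ha3, ha2]
      refine ⟨m ⟨q, hq⟩, ⟨⟨q, hq⟩, trivial, rfl⟩, ?_⟩
      have e1 : l (m ⟨q, hq⟩) = l q := congrFun hlm ⟨q, hq⟩
      have e2 : r (m ⟨q, hq⟩) = r (pf ⟨q, hq⟩) := congrFun hrm ⟨q, hq⟩
      rw [e1, e2, ← hq'pf, ha1, ha4]
    · rintro ⟨_, ⟨w, _, rfl⟩, heqp⟩
      rw [heqp]
      refine ⟨r w.1, ?_, ?_⟩
      · refine ⟨w.1, w.2, ?_⟩
        have e1 : l (m w) = l w.1 := congrFun hlm w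
        rw [e1]
      · refine ⟨pf w, hpfmem w, ?_⟩
        have e2 : r (m w) = r (pf w) := congrFun hrm w
        have e3 : l (pf w) = r w.1 := hpfval w
        rw [e2, ← e3]
  -- Symmetry preservation of the projections
  have hfamPi1 : FamPres (famOf Pt l r) (famOf St.toES lS rS) Pi1 := by
    rintro θ ⟨z, hz, rfl⟩
    show relMap Pi1 (pairsOf l r z) ∈ famOf St.toES lS rS
    rw [show relMap Pi1 (pairsOf l r z) = pairsOf lS rS (Pit1 '' z) from
      relMap_pairs_square (fun p => sq1l p) (fun p => sq1r p)]
    exact pairsOf_mem_famOf (hPt.1.1 _ hz)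
  have hfamPi2 : FamPres (famOf Pt l r) (famOf Tt.toES lT rT) Pi2 := by
    rintro θ ⟨z, hz, rfl⟩
    show relMap Pi2 (pairsOf l r z) ∈ famOf Tt.toES lT rT
    rw [show relMap Pi2 (pairsOf l r z) = pairsOf lT rT (Pit2 '' z) from
      relMap_pairs_square (fun p => sq2l p) (fun p => sq2r p)]
    exact pairsOf_mem_famOf (hPt.2.1.1 _ hz)
  -- The universal property in event structures with symmetry
  have hUP : ∀ {X : Type u} (EX : ES X) (SX : Set (Rel2 X)), IsIsoFamily EX SX →
      ∀ (x : X → SE) (y : X → TE),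
        IsMap EX S.toES x → FamPres SX (famOf St.toES lS rS) x →
        IsMap EX T.toES y → FamPres SX (famOf Tt.toES lT rT) y →
        σ ∘ x = τ ∘ y →
        ∃! h : X → PE, IsMap EX P h ∧ FamPres SX (famOf Pt l r) h ∧
          Pi1 ∘ h = x ∧ Pi2 ∘ h = y := by
    intro X EX SX hfam x y hx hfx hy hfy hcxy
    obtain ⟨h, ⟨hhm, hh1, hh2⟩, huniq⟩ := hP.2.2.2 EX x y hx hy hcxy
    refine ⟨h, ⟨hhm, ?_, hh1, hh2⟩, ?_⟩
    · intro θ hθ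
      obtain ⟨hbij, hc₁, hc₂⟩ := hfam.1 θ hθ
      have hc₁fin := config_finite hc₁
      have hvalc : IsMap (restES EX (rdom θ) hc₁fin) EX Subtype.val := restES_val_map hc₁
      have hpex : ∀ w : ↥(rdom θ), ∃ e₂, (w.1, e₂) ∈ θ := by
        intro w
        obtain ⟨p, hp, hpe⟩ := w.2
        exact ⟨p.2, by rw [← hpe]; exact hp⟩
      choose pfun hpfun using hpex
      have hpdet : ∀ (w : ↥(rdom θ)) e₂, (w.1, e₂) ∈ θ → e₂ = pfun w := by
        intro w e₂ hm
        exact (hbij (w.1, e₂) hm (w.1, pfun w) (hpfun w)).mp rfl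
      have hpmap : IsMap (restES EX (rdom θ) hc₁fin) EX pfun := by
        constructor
        · intro c hc
          have hvc : Config EX (Subtype.val '' c) := (restES_config_iff hc₁ c).mp hc
          have hvsub : Subtype.val '' c ⊆ rdom θ := by
            rintro _ ⟨w, _, rfl⟩; exact w.2
          have hres := hfam.2.2.2.2.1 θ hθ _ hvc hvsub
          have hresc := (hfam.1 _ hres).2.2
          have himg : pfun '' c = rran (relRestrict θ (Subtype.val '' c)) := by
            ext b
            constructor
            · rintro ⟨w, hw, rfl⟩
              exact ⟨(w.1, pfun w), ⟨hpfun w, ⟨w, hw, rfl⟩⟩, rfl⟩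
            · rintro ⟨p, ⟨hpθ, hp1⟩, rfl⟩
              obtain ⟨w, hw, hwe⟩ := hp1
              refine ⟨w, hw, ?_⟩
              have hp2 : p.2 = pfun w := hpdet w p.2 (by rw [hwe]; exact hpθ)
              exact hp2.symm
          rw [himg]
          exact hresc
        · intro c _ w hw w' hw' hee
          have h1 : w.1 = w'.1 :=
            (hbij (w.1, pfun w) (hpfun w) (w'.1, pfun w') (hpfun w')).mpr hee
          exact Subtype.ext h1
      obtain ⟨u, hu, heu⟩ := hfx θ hθ
      obtain ⟨v, hv, hev⟩ := hfy θ hθ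
      have heu' : relMap x θ = pairsOf lS rS u := heu
      have hev' : relMap y θ = pairsOf lT rT v := hev
      have hrangeS : ∀ w : ↥(rdom θ), ∃ a ∈ u, lS a = (x ∘ Subtype.val) w := by
        intro w
        have hm : (x w.1, x (pfun w)) ∈ relMap x θ := ⟨(w.1, pfun w), hpfun w, rfl⟩
        rw [heu'] at hm
        obtain ⟨a, ha, he⟩ := hm
        exact ⟨a, ha, (congrArg Prod.fst he).symm⟩
      have hrangeT : ∀ w : ↥(rdom θ), ∃ a ∈ v, lT a = (y ∘ Subtype.val) w := by
        intro w
        have hm : (y w.1, y (pfun w)) ∈ relMap y θ := ⟨(w.1, pfun w), hpfun w, rfl⟩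
        rw [hev'] at hm
        obtain ⟨a, ha, he⟩ := hm
        exact ⟨a, ha, (congrArg Prod.fst he).symm⟩
      obtain ⟨k₁, hk₁, hk₁mem, hk₁val⟩ :=
        invmap_exists hlSm hlSrig hu (isMap_comp hvalc hx) hrangeS
      obtain ⟨k₂, hk₂, hk₂mem, hk₂val⟩ :=
        invmap_exists hlTm hlTrig hv (isMap_comp hvalc hy) hrangeT
      have hk₁r : ∀ w, rS (k₁ w) = x (pfun w) := by
        intro w
        have hm : (lS (k₁ w), rS (k₁ w)) ∈ relMap x θ := by
          rw [heu']; exact mem_pairsOf (hk₁mem w)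
        obtain ⟨⟨d, d'⟩, hdθ, hde⟩ := hm
        have hd1 : x d = lS (k₁ w) := congrArg Prod.fst hde
        have hd2 : x d' = rS (k₁ w) := congrArg Prod.snd hde
        have hdc : d ∈ rdom θ := ⟨(d, d'), hdθ, rfl⟩
        have hdw : d = w.1 := hx.2 _ hc₁ d hdc w.1 w.2 (by rw [hd1]; exact hk₁val w)
        have hd' : d' = pfun w := hpdet w d' (by rw [← hdw]; exact hdθ)
        rw [← hd2, hd']
      have hk₂r : ∀ w, rT (k₂ w) = y (pfun w) := by
        intro w
        have hm : (lT (k₂ w), rT (k₂ w)) ∈ relMap y θ := by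
          rw [hev']; exact mem_pairsOf (hk₂mem w)
        obtain ⟨⟨d, d'⟩, hdθ, hde⟩ := hm
        have hd1 : y d = lT (k₂ w) := congrArg Prod.fst hde
        have hd2 : y d' = rT (k₂ w) := congrArg Prod.snd hde
        have hdc : d ∈ rdom θ := ⟨(d, d'), hdθ, rfl⟩
        have hdw : d = w.1 := hy.2 _ hc₁ d hdc w.1 w.2 (by rw [hd1]; exact hk₂val w)
        have hd' : d' = pfun w := hpdet w d' (by rw [← hdw]; exact hdθ)
        rw [← hd2, hd']
      have hcomm2 : sigt ∘ k₁ = taut ∘ k₂ := by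
        funext w
        show sigt (k₁ w) = taut (k₂ w)
        apply hjmA
        · rw [hsq1, hsq3, hk₁val w, hk₂val w]
          exact congrFun hcxy w.1
        · rw [hsq2, hsq4, hk₁r w, hk₂r w]
          exact congrFun hcxy (pfun w)
      obtain ⟨m, hm, _, _, hlm, hrm⟩ := mkMember hP hPt hl hl1 hl2 hr hr1 hr2 _ k₁ k₂
        hk₁ hk₂ hcomm2 (isMap_comp hvalc hhm) (isMap_comp hpmap hhm)
        (fun w => (hk₁val w).trans (congrFun hh1 w.1).symm)
        (fun w => (hk₁r w).trans (congrFun hh1 (pfun w)).symm)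
        (fun w => (hk₂val w).trans (congrFun hh2 w.1).symm)
        (fun w => (hk₂r w).trans (congrFun hh2 (pfun w)).symm)
      refine ⟨m '' Set.univ, hm.1 _ (restES_univ_config hc₁), ?_⟩
      ext ⟨p1, p2⟩
      constructor
      · rintro ⟨⟨d, d'⟩, hdθ, hde⟩
        have hdc : d ∈ rdom θ := ⟨(d, d'), hdθ, rfl⟩
        have hd' : d' = pfun ⟨d, hdc⟩ := hpdet ⟨d, hdc⟩ d' hdθ
        refine ⟨m ⟨d, hdc⟩, ⟨⟨d, hdc⟩, trivial, rfl⟩, ?_⟩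
        have e1 : l (m ⟨d, hdc⟩) = h d := congrFun hlm ⟨d, hdc⟩
        have e2 : r (m ⟨d, hdc⟩) = h (pfun ⟨d, hdc⟩) := congrFun hrm ⟨d, hdc⟩
        rw [e1, e2, ← hd']
        exact hde.symm
      · rintro ⟨_, ⟨w, _, rfl⟩, heqp⟩
        rw [heqp]
        refine ⟨(w.1, pfun w), hpfun w, ?_⟩
        have e1 : l (m w) = h w.1 := congrFun hlm w
        have e2 : r (m w) = h (pfun w) := congrFun hrm w
        show (h w.1, h (pfun w)) = (l (m w), r (m w))
        rw [e1, e2]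
    · rintro h' ⟨h'm, _, h'1, h'2⟩
      exact huniq h' ⟨h'm, h'1, h'2⟩
  exact ⟨⟨open_l, open_r, jm, hrelId, hrelInv, hrelComp⟩, hfamPi1, hfamPi2, hUP⟩
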